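/- arXiv:math/9902020 — 7 statements merged into one kernel-verified Lean document; each statement's English description precedes it below -/
import Mathlib

section
/- For all n ≥ 4 and each k, the map swapping the last two entries p_{n-1} and p_n of a permutation of {1,...,n} changes its number of runs by exactly 1 (increasing it for exactly half of all permutations and decreasing it for the other half). -/
open Finset

/-- The value of the permutation `p` at (0-indexed) position `i`, as a natural number. -/
def permVal (n : ℕ) (p : Equiv.Perm (Fin n)) (i : ℕ) : ℕ :=
  if h : i < n then (p ⟨i, h⟩ : ℕ) else 0

/-- `p` changes direction at 0-indexed interior position `i` (peak or valley). -/
def dirChange (n : ℕ) (p : Equiv.Perm (Fin n)) (i : ℕ) : Prop :=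
  (permVal n p (i-1) < permVal n p i ∧ permVal n p (i+1) < permVal n p i) ∨
  (permVal n p i < permVal n p (i-1) ∧ permVal n p i < permVal n p (i+1))

instance (n : ℕ) (p : Equiv.Perm (Fin n)) : DecidablePred (dirChange n p) := fun i => by
  unfold dirChange; infer_instance

/-- Number of runs of a permutation: one more than the number of interior direction changes. -/
def numRuns (n : ℕ) (p : Equiv.Perm (Fin n)) : ℕ :=
  ((Finset.Ico 1 (n-1)).filter (dirChange n p)).card + 1

/-- `R n k` is the number of permutations of `{1,...,n}` with exactly `k` runs. -/
def R (n k : ℕ) : ℕ :=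
  (Finset.univ.filter (fun p : Equiv.Perm (Fin n) => numRuns n p = k)).card

/-- Number of descents of a permutation. -/
def numDescents (n : ℕ) (p : Equiv.Perm (Fin n)) : ℕ :=
  ((Finset.range (n-1)).filter (fun i => permVal n p (i+1) < permVal n p i)).card

/-- `A n k`: Eulerian numbers, counting permutations with `k` descents. -/
def A (n k : ℕ) : ℕ :=
  (Finset.univ.filter (fun p : Equiv.Perm (Fin n) => numDescents n p = k)).card

/-- The run-generating polynomial `R_n(x) = Σ_k R(n,k) x^k`. -/
noncomputable def Rpoly (n : ℕ) : Polynomial ℤ :=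
  ∑ k ∈ Finset.range n, Polynomial.C ((R n k : ℤ)) * Polynomial.X ^ k

/-- `p` is `j`-half-ascending: `p_{n+1-2i} < p_{n+2-2i}` (1-indexed) for all `1 ≤ i ≤ j`. -/
def HalfAscJ (n j : ℕ) (p : Equiv.Perm (Fin n)) : Prop :=
  ∀ i ∈ Finset.Icc 1 j, permVal n p (n - 2*i) < permVal n p (n + 1 - 2*i)

instance (n j : ℕ) : DecidablePred (HalfAscJ n j) := fun p => by
  unfold HalfAscJ; infer_instance

/-- For `n` even: `p` is half-ascending if `p_{2i-1} < p_{2i}` (1-indexed) for `1 ≤ i ≤ n/2`. -/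
def HalfAsc (n : ℕ) (p : Equiv.Perm (Fin n)) : Prop :=
  ∀ i ∈ Finset.range (n/2), permVal n p (2*i) < permVal n p (2*i+1)

instance (n : ℕ) : DecidablePred (HalfAsc n) := fun p => by
  unfold HalfAsc; infer_instance

/-- `U n k`: number of half-ascending permutations with exactly `k` descents. -/
def U (n k : ℕ) : ℕ :=
  (Finset.univ.filter (fun p : Equiv.Perm (Fin n) =>
    HalfAsc n p ∧ numDescents n p = k)).card

/-- Number of runs of the prefix `p_1, ..., p_L` (1-indexed). -/
def prefixRuns (n L : ℕ) (p : Equiv.Perm (Fin n)) : ℕ :=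
  ((Finset.Ico 1 (L-1)).filter (dirChange n p)).card + 1

/-- Number of descents of the suffix starting at 0-indexed position `a`. -/
def suffixDescents (n a : ℕ) (p : Equiv.Perm (Fin n)) : ℕ :=
  ((Finset.Ico a (n-1)).filter (fun i => permVal n p (i+1) < permVal n p i)).card

/-- `t_j(p) = r_j(p) + s_j(p)`: runs of the prefix `p_1..p_{n-2j}` plus descents of the
suffix `p_{n-2j}..p_n`. -/
def tstat (n j : ℕ) (p : Equiv.Perm (Fin n)) : ℕ :=
  prefixRuns n (n - 2*j) p + suffixDescents n (n - 2*j - 1) p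

/-- `R_{n,j}(x) = Σ_p x^{t_j(p)}` over `j`-half-ascending permutations `p`. -/
noncomputable def RpolyJ (n j : ℕ) : Polynomial ℤ :=
  ∑ p ∈ Finset.univ.filter (HalfAscJ n j), Polynomial.X ^ (tstat n j p)

/-- A labeled northeastern lattice path with `n` edges, encoded as a function assigning to the
`i`-th edge (0-indexed; the paper's edge `a_{i+1}`) a direction (`true` = vertical) and a label.
Conditions (1)-(3) of the paper. -/
def IsLPath (n : ℕ) (f : Fin n → Bool × ℕ) : Prop :=
  (∀ i : Fin n, 1 ≤ (f i).2) ∧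
  (∀ h : 0 < n, (f ⟨0, h⟩).1 = false ∧ (f ⟨0, h⟩).2 = 1) ∧
  (∀ i : ℕ, (h : i + 1 < n) →
    ((f ⟨i, Nat.lt_of_succ_lt h⟩).1 = (f ⟨i+1, h⟩).1 →
      (f ⟨i+1, h⟩).2 ≤ (f ⟨i, Nat.lt_of_succ_lt h⟩).2) ∧
    ((f ⟨i, Nat.lt_of_succ_lt h⟩).1 ≠ (f ⟨i+1, h⟩).1 →
      (f ⟨i, Nat.lt_of_succ_lt h⟩).2 + (f ⟨i+1, h⟩).2 ≤ i + 2))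

/-- The number of vertical edges of a labeled lattice path. -/
def vertCount (n : ℕ) (f : Fin n → Bool × ℕ) : ℕ :=
  (Finset.univ.filter (fun i : Fin n => (f i).1 = true)).card

/-!
Only the turns at the last two interior positions can be affected by the swap. Among four
values `a, b, c, d` with consecutive ones distinct, the number of turns at `b` and `c` is odd
exactly when the steps `a b` and `c d` go in opposite directions. Swapping `c` and `d` reverses
the last step, so it changes this number, which lies in `{0, 1, 2}`, by an odd amount, hence by
exactly one. Since the swap is an involution, it matches the permutations where the number of
runs goes up with those where it goes down.
-/

def IsTurn (x y z : ℕ) : Prop := (x < y ∧ z < y) ∨ (y < x ∧ y < z)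

instance (x y z : ℕ) : Decidable (IsTurn x y z) := by
  unfold IsTurn; infer_instance

theorem isTurn_swap_last {a b c d : ℕ} (hab : a ≠ b) (hbc : b ≠ c) (hbd : b ≠ d)
    (hcd : c ≠ d) :
    (if IsTurn a b d then 1 else 0) + (if IsTurn b d c then 1 else 0) =
        (if IsTurn a b c then 1 else 0) + (if IsTurn b c d then 1 else 0) + 1 ∨
      (if IsTurn a b d then 1 else 0) + (if IsTurn b d c then 1 else 0) + 1 =
        (if IsTurn a b c then 1 else 0) + (if IsTurn b c d then 1 else 0) := by
  split_ifs <;> unfold IsTurn at * <;> omega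

theorem card_filter_eq_card_filter_of_involutive {α : Type*} [Fintype α] {g : α → α}
    (hg : Function.Involutive g) (F : α → ℕ) :
    #{x | F (g x) = F x + 1} = #{x | F (g x) + 1 = F x} :=
  card_nbij' g g (fun x hx => by simp_all [hg x]) (fun x hx => by simp_all [hg x])
    (fun x _ => hg x) (fun x _ => hg x)

theorem two_mul_card_filter_eq_card_of_involutive {α : Type*} [Fintype α] {g : α → α}
    (hg : Function.Involutive g) {F : α → ℕ}
    (hF : ∀ x, F (g x) = F x + 1 ∨ F (g x) + 1 = F x) :
    2 * #{x | F (g x) = F x + 1} = Fintype.card α ∧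
      2 * #{x | F (g x) + 1 = F x} = Fintype.card α := by
  have hsplit : #{x | F (g x) = F x + 1} + #{x | F (g x) + 1 = F x} = Fintype.card α := by
    rw [← card_univ, ← card_filter_add_card_filter_not (s := univ) (fun x => F (g x) = F x + 1)]
    congr 1
    refine congrArg card (filter_congr fun x _ => ?_)
    rcases hF x with h | h <;> omega
  have hbij := card_filter_eq_card_filter_of_involutive hg F
  omega

theorem permVal_trans {n : ℕ} (σ p : Equiv.Perm (Fin n)) {k : ℕ} (hk : k < n) :
    permVal n (σ.trans p) k = permVal n p (σ ⟨k, hk⟩) := by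
  simp [permVal, hk]

theorem permVal_ne {n : ℕ} (p : Equiv.Perm (Fin n)) {i j : ℕ} (hi : i < n) (hj : j < n)
    (hij : i ≠ j) : permVal n p i ≠ permVal n p j := by
  simp only [permVal, dif_pos hi, dif_pos hj, ne_eq, Fin.val_inj, p.apply_eq_iff_eq, Fin.mk.injEq]
  exact hij

theorem numRuns_eq_card_add_turns_last {n : ℕ} (hn : 4 ≤ n) (p : Equiv.Perm (Fin n)) :
    numRuns n p = #{i ∈ Ico 1 (n - 3) | dirChange n p i} +
      (if IsTurn (permVal n p (n - 4)) (permVal n p (n - 3)) (permVal n p (n - 2)) then 1 else 0) +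
      (if IsTurn (permVal n p (n - 3)) (permVal n p (n - 2)) (permVal n p (n - 1)) then 1 else 0)
      + 1 := by
  have hIco : n - 1 = n - 3 + 1 + 1 := by omega
  rw [numRuns, hIco, card_filter, sum_Ico_succ_top (by omega), sum_Ico_succ_top (by omega),
    ← card_filter]
  have e1 : n - 3 - 1 = n - 4 := by omega
  have e2 : n - 3 + 1 = n - 2 := by omega
  have e3 : n - 2 - 1 = n - 3 := by omega
  have e4 : n - 2 + 1 = n - 1 := by omega
  simp only [dirChange, IsTurn, e1, e2, e3, e4]

def lastSwap (n : ℕ) (hn : 2 ≤ n) : Equiv.Perm (Fin n) :=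
  Equiv.swap ⟨n - 2, by omega⟩ ⟨n - 1, by omega⟩

theorem numRuns_lastSwap {n : ℕ} (hn : 4 ≤ n) (p : Equiv.Perm (Fin n)) :
    numRuns n ((lastSwap n (by omega)).trans p) = numRuns n p + 1 ∨
      numRuns n ((lastSwap n (by omega)).trans p) + 1 = numRuns n p := by
  set q := (lastSwap n (by omega)).trans p
  have hfix : ∀ k < n - 2, permVal n q k = permVal n p k := fun k hk => by
    rw [permVal_trans _ _ (by omega), lastSwap, Equiv.swap_apply_of_ne_of_ne] <;>
      simp only [ne_eq, Fin.ext_iff] <;> omega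
  have hfirst : permVal n q (n - 2) = permVal n p (n - 1) := by
    rw [permVal_trans _ _ (by omega), lastSwap, Equiv.swap_apply_left]
  have hlast : permVal n q (n - 1) = permVal n p (n - 2) := by
    rw [permVal_trans _ _ (by omega), lastSwap, Equiv.swap_apply_right]
  have hprefix :
      #{i ∈ Ico 1 (n - 3) | dirChange n q i} = #{i ∈ Ico 1 (n - 3) | dirChange n p i} := by
    refine congrArg card (filter_congr fun i hi => ?_)
    rw [mem_Ico] at hi
    simp only [dirChange, hfix (i - 1) (by omega), hfix i (by omega), hfix (i + 1) (by omega)]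
  rw [numRuns_eq_card_add_turns_last hn q, numRuns_eq_card_add_turns_last hn p, hprefix,
    hfix (n - 4) (by omega), hfix (n - 3) (by omega), hfirst, hlast]
  have hturns := isTurn_swap_last
    (permVal_ne p (i := n - 4) (j := n - 3) (by omega) (by omega) (by omega))
    (permVal_ne p (i := n - 3) (j := n - 2) (by omega) (by omega) (by omega))
    (permVal_ne p (i := n - 3) (j := n - 1) (by omega) (by omega) (by omega))
    (permVal_ne p (i := n - 2) (j := n - 1) (by omega) (by omega) (by omega))
  omega

/-- for `n ≥ 4`, swapping the last two entries changes the number of runs by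
exactly 1, increasing it for exactly half of all permutations and decreasing it for the
other half. -/
theorem stmt1 (n : ℕ) (hn : 4 ≤ n) :
    (∀ p : Equiv.Perm (Fin n),
      numRuns n ((Equiv.swap (⟨n-2, by omega⟩ : Fin n) ⟨n-1, by omega⟩).trans p)
          = numRuns n p + 1 ∨
      numRuns n ((Equiv.swap (⟨n-2, by omega⟩ : Fin n) ⟨n-1, by omega⟩).trans p) + 1
          = numRuns n p) ∧
    2 * (Finset.univ.filter (fun p : Equiv.Perm (Fin n) =>
        numRuns n ((Equiv.swap (⟨n-2, by omega⟩ : Fin n) ⟨n-1, by omega⟩).trans p)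
          = numRuns n p + 1)).card = Nat.factorial n ∧
    2 * (Finset.univ.filter (fun p : Equiv.Perm (Fin n) =>
        numRuns n ((Equiv.swap (⟨n-2, by omega⟩ : Fin n) ⟨n-1, by omega⟩).trans p) + 1
          = numRuns n p)).card = Nat.factorial n := by
  have hinv : Function.Involutive fun p : Equiv.Perm (Fin n) => (lastSwap n (by omega)).trans p :=
    fun p => by ext; simp [lastSwap]
  have hhalf := two_mul_card_filter_eq_card_of_involutive hinv (numRuns_lastSwap hn)
  rw [Fintype.card_perm, Fintype.card_fin] at hhalf
  exact ⟨numRuns_lastSwap hn, hhalf⟩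
end

section
/- For all n ≥ 4, the polynomial R_n(x) = Σ_{k=1}^{n-1} R(n,k) x^k is divisible by (x+1)^m, where m = ⌊(n−2)/2⌋. -/
open Finset

/-!
Inserting a new maximum into each of the `n + 1` gaps of a permutation of length `n ≥ 2` with
`k` runs leaves the number of runs unchanged in `k` gaps, raises it by one in two gaps and by
two in the remaining `n - 1 - k` gaps. Hence
`R_{n+1} = x (1 - x²) R_n' + (2x + (n - 1) x²) R_n`.
Since `(1 - x²) f'` is divisible by every power of `x + 1` dividing `f`, this recurrence
preserves divisibility by `(x + 1)^j`; when `n = 2j + 3` and `(x + 1)^j ∣ R_n` it even produces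
a factor `(x + 1)^(j + 1)`. Induction from `n = 2`, where the exponent is `0`, gives
`⌊(n - 2)/2⌋`.
-/

open Polynomial

namespace AscentWord

def turns (w : ℕ → Bool) (K : ℕ) : ℕ := #{i ∈ range K | w i ≠ w (i + 1)}

/-- `w i` records whether position `i` is an ascent. Inserting a new maximum into gap `a` of the
underlying sequence replaces letter `a - 1` by an ascent followed by a descent (for `a = 0` it just
prepends a descent). -/
def insertPeak (w : ℕ → Bool) (a : ℕ) (i : ℕ) : Bool :=
  if i + 1 < a then w i else if i + 1 = a then true else if i = a then false else w (i - 1)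

def peakGain (w : ℕ → Bool) (K a : ℕ) : ℕ :=
  if a = 0 then (w 0).toNat
  else if a = K + 2 then (!w K).toNat
  else if w (a - 1) then (if a = K + 1 then 1 else 2 * (w a).toNat)
  else (if a = 1 then 1 else 2 * (!w (a - 2)).toNat)

variable (w : ℕ → Bool)

theorem turns_le (K : ℕ) : turns w K ≤ K :=
  (card_filter_le _ _).trans (card_range K).le

theorem turns_succ (K : ℕ) :
    turns w (K + 1) = (if w 0 = w 1 then 0 else 1) + turns (w ∘ Nat.succ) K := by
  simp only [turns, card_filter, sum_range_succ', Function.comp, Nat.succ_eq_add_one]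
  split_ifs <;> simp_all [add_comm]

theorem insertPeak_zero_comp_succ : insertPeak w 0 ∘ Nat.succ = w := by
  funext i; simp [insertPeak]

theorem insertPeak_succ_comp_succ (a : ℕ) :
    insertPeak w (a + 1) ∘ Nat.succ = insertPeak (w ∘ Nat.succ) a := by
  funext i
  simp only [insertPeak, Function.comp, Nat.succ_eq_add_one]
  split_ifs <;> first | rfl | omega | (congr 1; omega)

-- Away from the first two gaps the gain ignores the first letter, so the identities below follow
-- by induction on the length, peeling off that letter.
theorem peakGain_succ {a : ℕ} (K : ℕ) (ha : 2 ≤ a) :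
    peakGain w (K + 1) (a + 1) = peakGain (w ∘ Nat.succ) K a := by
  simp only [peakGain, Function.comp, Nat.succ_eq_add_one,
    show a - 1 + 1 = a by omega, show a - 2 + 1 = a + 1 - 2 by omega, Nat.add_sub_cancel]
  simp only [show a + 1 ≠ 0 by omega, show a ≠ 0 by omega, show a + 1 ≠ 1 by omega,
    show a ≠ 1 by omega, add_left_inj, if_false]

theorem turns_insertPeak (K : ℕ) {a : ℕ} (ha : a ≤ K + 2) :
    turns (insertPeak w a) (K + 1) = turns w K + peakGain w K a := by
  induction K generalizing w a with
  | zero =>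
    rw [turns_succ]
    interval_cases a <;> cases h : w 0 <;> simp [turns, insertPeak, peakGain, h]
  | succ K ih =>
    rcases a with _ | a
    · rw [turns_succ, insertPeak_zero_comp_succ]
      cases h : w 0 <;> simp [insertPeak, peakGain, h, add_comm]
    rw [turns_succ, insertPeak_succ_comp_succ, ih _ (by omega), turns_succ]
    rcases Nat.lt_or_ge a 2 with h | h
    · interval_cases a <;> cases h0 : w 0 <;> cases h1 : w 1 <;>
        simp [insertPeak, peakGain, h0, h1] <;> omega
    · rw [peakGain_succ w K h]
      simp [insertPeak, show 2 < a + 1 by omega, show 1 < a + 1 by omega]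
      omega

theorem sum_X_pow_peakGain {S : Type*} [CommRing S] (K : ℕ) :
    ∑ a ∈ range (K + 3), (X : S[X]) ^ peakGain w K a
      = ((turns w K : S[X]) + 1) + 2 * X + ((K : S[X]) - (turns w K : S[X])) * X ^ 2 := by
  induction K generalizing w with
  | zero => cases h : w 0 <;> simp [sum_range_succ, peakGain, turns, h] <;> ring
  | succ K ih =>
    have ih' := ih (w ∘ Nat.succ)
    rw [sum_range_succ', sum_range_succ'] at ih'
    rw [sum_range_succ', sum_range_succ', sum_range_succ', turns_succ]
    have tail : ∀ a ∈ range (K + 1), (X : S[X]) ^ peakGain w (K + 1) (a + 1 + 1 + 1)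
        = X ^ peakGain (w ∘ Nat.succ) K (a + 1 + 1) := fun a _ => by
      rw [peakGain_succ w K (by omega)]
    rw [sum_congr rfl tail]
    rw [eq_sub_of_add_eq (eq_sub_of_add_eq ih')]
    cases h0 : w 0 <;> cases h1 : w 1 <;> simp [peakGain, h0, h1] <;> ring

end AscentWord

open AscentWord

section Permutations

variable {n : ℕ}

theorem permVal_lt (p : Equiv.Perm (Fin n)) {i : ℕ} (hi : i < n) : permVal n p i < n := by
  simp [permVal, hi]

theorem permVal_le (p : Equiv.Perm (Fin n)) (i : ℕ) : permVal n p i ≤ n := by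
  unfold permVal; split_ifs <;> omega

theorem eq_of_permVal_eq (p : Equiv.Perm (Fin n)) {i j : ℕ} (hi : i < n) (hj : j < n)
    (h : permVal n p i = permVal n p j) : i = j := by
  simpa [permVal, hi, hj, Fin.val_inj] using h

def ascents (n : ℕ) (p : Equiv.Perm (Fin n)) (i : ℕ) : Bool :=
  decide (permVal n p i < permVal n p (i + 1))

theorem dirChange_succ_iff (p : Equiv.Perm (Fin n)) {i : ℕ} (hi : i + 2 < n) :
    dirChange n p (i + 1) ↔ ascents n p i ≠ ascents n p (i + 1) := by
  have h₁ := eq_of_permVal_eq p (i := i) (j := i + 1) (by omega) (by omega)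
  have h₂ := eq_of_permVal_eq p (i := i + 1) (j := i + 1 + 1) (by omega) (by omega)
  simp only [dirChange, ascents, Nat.add_sub_cancel, ne_eq, decide_eq_decide]
  omega

theorem numRuns_eq_turns (p : Equiv.Perm (Fin n)) :
    numRuns n p = turns (ascents n p) (n - 2) + 1 := by
  simp only [numRuns, turns, card_filter, sum_Ico_eq_sum_range]
  congr 1
  refine sum_congr (by congr 1) fun i hi => ?_
  rw [add_comm 1 i]
  exact if_congr (dirChange_succ_iff p (by simp at hi; omega)) rfl rfl

def insertMax (q : Equiv.Perm (Fin n)) (a : Fin (n + 1)) : Equiv.Perm (Fin (n + 1)) :=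
  (finSuccEquiv' a).trans ((Equiv.optionCongr q).trans (finSuccEquiv' (Fin.last n)).symm)

theorem insertMax_apply_self (q : Equiv.Perm (Fin n)) (a : Fin (n + 1)) :
    insertMax q a a = Fin.last n := by
  simp [insertMax, finSuccEquiv'_at]

theorem insertMax_apply_succAbove (q : Equiv.Perm (Fin n)) (a : Fin (n + 1)) (j : Fin n) :
    insertMax q a (a.succAbove j) = (q j).castSucc := by
  simp [insertMax, finSuccEquiv'_succAbove]

theorem insertMax_symm_last (q : Equiv.Perm (Fin n)) (a : Fin (n + 1)) :
    (insertMax q a).symm (Fin.last n) = a :=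
  (Equiv.symm_apply_eq _).2 (insertMax_apply_self q a).symm

theorem permVal_insertMax (q : Equiv.Perm (Fin n)) (a : Fin (n + 1)) (i : ℕ) :
    permVal (n + 1) (insertMax q a) i
      = if i < a then permVal n q i else if i = a then n else permVal n q (i - 1) := by
  rcases lt_trichotomy i a with hi | rfl | hi
  · have hin : i < n := by omega
    have : (⟨i, by omega⟩ : Fin (n + 1)) = a.succAbove ⟨i, hin⟩ :=
      (Fin.succAbove_of_castSucc_lt a ⟨i, hin⟩ (by simpa [Fin.lt_def] using hi)).symm
    simp [permVal, hi, hin, show i < n + 1 by omega, this, insertMax_apply_succAbove]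
  · simp [permVal, a.isLt, insertMax_apply_self]
  · rw [if_neg (by omega), if_neg (by omega)]
    by_cases hin : i < n + 1
    · have : (⟨i, hin⟩ : Fin (n + 1)) = a.succAbove ⟨i - 1, by omega⟩ := by
        rw [Fin.succAbove_of_le_castSucc _ _ (by simp [Fin.le_def]; omega)]
        ext; simp; omega
      simp [permVal, hin, this, insertMax_apply_succAbove, show i - 1 < n by omega]
    · simp [permVal, hin, show ¬ i - 1 < n by omega]

-- Past the end both sides read the junk value `permVal _ _ i = 0`, so this holds at every index.
theorem ascents_insertMax (q : Equiv.Perm (Fin n)) (a : Fin (n + 1)) :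
    ascents (n + 1) (insertMax q a) = insertPeak (ascents n q) a := by
  funext i
  have ha := a.isLt
  simp only [ascents, insertPeak, permVal_insertMax]
  rcases lt_trichotomy (i + 1) a with h | h | h
  · simp [h, show i < a by omega]
  · simp [← h, permVal_lt q (show i < n by omega)]
  · rcases Nat.lt_or_ge a i with h' | h'
    · simp [show ¬ i < a by omega, show i ≠ a by omega, show ¬ i + 1 < a by omega, h.ne',
        Nat.sub_add_cancel (show 1 ≤ i by omega)]
    · simp [show i = a by omega, permVal_le]

theorem insertMax_injective :
    Function.Injective fun x : Equiv.Perm (Fin n) × Fin (n + 1) => insertMax x.1 x.2 := by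
  rintro ⟨q, a⟩ ⟨q', a'⟩ h
  have ha : a = a' := by
    rw [← insertMax_symm_last q a, ← insertMax_symm_last q' a']
    exact congrArg (fun p => p.symm (Fin.last n)) h
  subst ha
  refine Prod.ext (Equiv.ext fun j => Fin.castSucc_injective n ?_) rfl
  simpa only [insertMax_apply_succAbove] using DFunLike.congr_fun h (a.succAbove j)

theorem insertMax_bijective :
    Function.Bijective fun x : Equiv.Perm (Fin n) × Fin (n + 1) => insertMax x.1 x.2 :=
  (Fintype.bijective_iff_injective_and_card _).2
    ⟨insertMax_injective, by simp [Fintype.card_perm, Nat.factorial_succ, mul_comm]⟩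

theorem numRuns_insertMax (hn : 2 ≤ n) (q : Equiv.Perm (Fin n)) (a : Fin (n + 1)) :
    numRuns (n + 1) (insertMax q a) = numRuns n q + peakGain (ascents n q) (n - 2) a := by
  rw [numRuns_eq_turns, numRuns_eq_turns, ascents_insertMax, show n + 1 - 2 = n - 2 + 1 by omega,
    turns_insertPeak _ _ (by omega), add_right_comm]

theorem sum_X_pow_numRuns_insertMax (hn : 2 ≤ n) (q : Equiv.Perm (Fin n)) :
    ∑ a : Fin (n + 1), (X : ℤ[X]) ^ numRuns (n + 1) (insertMax q a)
      = X ^ numRuns n q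
        * ((numRuns n q : ℤ[X]) + 2 * X + ((n : ℤ[X]) - 1 - (numRuns n q : ℤ[X])) * X ^ 2) := by
  simp only [numRuns_insertMax hn, pow_add, ← mul_sum]
  rw [Fin.sum_univ_eq_sum_range (fun a => (X : ℤ[X]) ^ peakGain (ascents n q) (n - 2) a),
    show n + 1 = n - 2 + 3 by omega, sum_X_pow_peakGain, numRuns_eq_turns,
    Nat.cast_sub (by omega)]
  push_cast
  ring

theorem numRuns_lt (hn : 2 ≤ n) (p : Equiv.Perm (Fin n)) : numRuns n p < n := by
  have := turns_le (ascents n p) (n - 2)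
  rw [numRuns_eq_turns]
  omega

end Permutations

theorem Rpoly_eq_sum {n : ℕ} (hn : 2 ≤ n) :
    Rpoly n = ∑ p : Equiv.Perm (Fin n), (X : ℤ[X]) ^ numRuns n p := by
  rw [Rpoly, ← sum_fiberwise_of_maps_to (t := range n) fun p _ => mem_range.2 (numRuns_lt hn p)]
  refine sum_congr rfl fun k _ => ?_
  rw [sum_congr rfl fun p hp => by rw [(mem_filter.1 hp).2], sum_const, R, nsmul_eq_mul]
  simp

theorem Rpoly_succ {n : ℕ} (hn : 2 ≤ n) :
    Rpoly (n + 1) = X * (1 - X ^ 2) * derivative (Rpoly n)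
      + (2 * X + ((n : ℤ[X]) - 1) * X ^ 2) * Rpoly n := by
  rw [Rpoly_eq_sum (by omega), Rpoly_eq_sum hn,
    ← insertMax_bijective.sum_comp (fun p => (X : ℤ[X]) ^ numRuns (n + 1) p),
    Fintype.sum_prod_type, derivative_sum, mul_sum, mul_sum, ← sum_add_distrib]
  refine sum_congr rfl fun q _ => ?_
  rw [sum_X_pow_numRuns_insertMax hn, numRuns_eq_turns, derivative_X_pow, C_eq_natCast]
  push_cast
  ring

section Divisibility

variable {S : Type*} [CommRing S]

theorem mul_derivative_pow_mul (p g : S[X]) (j : ℕ) :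
    p * derivative (p ^ j * g) = p ^ j * ((j : S[X]) * derivative p * g + p * derivative g) := by
  rcases j with _ | j
  · simp
  · simp only [derivative_mul, derivative_pow_succ, map_add, map_natCast, map_one]
    push_cast
    ring

theorem pow_dvd_mul_derivative {p f : S[X]} {j : ℕ} (h : p ^ j ∣ f) :
    p ^ j ∣ p * derivative f := by
  obtain ⟨g, rfl⟩ := h
  rw [mul_derivative_pow_mul]
  exact dvd_mul_right _ _

theorem X_add_one_pow_dvd_step {f : S[X]} {j : ℕ} (g : S[X]) (h : (X + 1) ^ j ∣ f) :
    (X + 1) ^ j ∣ X * (1 - X ^ 2) * derivative f + g * f := by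
  rw [show X * (1 - X ^ 2) * derivative f = X * (1 - X) * ((X + 1) * derivative f) by ring]
  exact dvd_add ((pow_dvd_mul_derivative h).mul_left _) (h.mul_left g)

theorem X_add_one_pow_succ_dvd_step {f : S[X]} {j : ℕ} (h : (X + 1) ^ j ∣ f) :
    (X + 1) ^ (j + 1) ∣
      X * (1 - X ^ 2) * derivative f + (2 * X + (2 * (j : S[X]) + 2) * X ^ 2) * f := by
  obtain ⟨g, rfl⟩ := h
  have key := mul_derivative_pow_mul (X + 1) g j
  simp only [derivative_add, derivative_X, derivative_one, add_zero, mul_one] at key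
  refine ⟨X * (((j : S[X]) + 2) * g + (1 - X) * derivative g), ?_⟩
  linear_combination X * (1 - X) * key

end Divisibility

theorem stmt3_general (n : ℕ) :
    (Polynomial.X + 1) ^ ((n - 2) / 2) ∣ Rpoly n := by
  rcases Nat.lt_or_ge n 2 with hn | hn
  · simp [show (n - 2) / 2 = 0 by omega]
  induction n, hn using Nat.le_induction with
  | base => simp
  | succ n hn ih =>
    rw [Rpoly_succ hn]
    rcases Nat.even_or_odd' n with ⟨j, rfl | rfl⟩
    · rw [show (2 * j + 1 - 2) / 2 = (2 * j - 2) / 2 by omega]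
      exact X_add_one_pow_dvd_step _ ih
    · obtain ⟨i, rfl⟩ : ∃ i, j = i + 1 := ⟨j - 1, by omega⟩
      rw [show (2 * (i + 1) + 1 - 2) / 2 = i by omega] at ih
      rw [show (2 * (i + 1) + 1 + 1 - 2) / 2 = i + 1 by omega,
        show ((2 * (i + 1) + 1 : ℕ) : ℤ[X]) - 1 = 2 * (i : ℤ[X]) + 2 by push_cast; ring]
      exact X_add_one_pow_succ_dvd_step ih

/-- for `n ≥ 4`, the polynomial `R_n(x)` is divisible by `(x+1)^m`,
where `m = ⌊(n-2)/2⌋`. -/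
theorem stmt3 (n : ℕ) (hn : 4 ≤ n) :
    (Polynomial.X + 1) ^ ((n - 2) / 2) ∣ Rpoly n :=
  stmt3_general n
end

section
/- Let n be even and let p be a half-ascending permutation of {1,...,n} (i.e., p_{2i−1} < p_{2i} for all 1 ≤ i ≤ n/2). Then p has exactly 2k+1 runs if and only if p has exactly k descents. -/
open Finset

/-- for `n` even and `p` half-ascending, `p` has exactly `2k+1` runs iff `p` has
exactly `k` descents. -/
theorem stmt5 (n : ℕ) (hn : Even n) (p : Equiv.Perm (Fin n)) (hp : HalfAsc n p) (k : ℕ) :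
    numRuns n p = 2 * k + 1 ↔ numDescents n p = k := by
  have hn2 : n % 2 = 0 := Nat.even_iff.mp hn
  have hasc : ∀ j, j % 2 = 0 → j + 1 < n → permVal n p j < permVal n p (j+1) := by
    intro j hj hjn
    have h2 : 2 * (j / 2) = j := by omega
    have := hp (j / 2) (Finset.mem_range.mpr (by omega))
    rwa [h2] at this
  set D := (Finset.range (n-1)).filter (fun i => permVal n p (i+1) < permVal n p i) with hD
  have hodd : ∀ i ∈ D, i % 2 = 1 := by
    intro i hi
    rw [hD, Finset.mem_filter, Finset.mem_range] at hi
    by_contra h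
    have := hasc i (by omega) (by omega)
    omega
  have hset : (Finset.Ico 1 (n-1)).filter (dirChange n p) = D ∪ D.image (· + 1) := by
    ext j
    simp only [Finset.mem_filter, Finset.mem_Ico, Finset.mem_union, Finset.mem_image,
      hD, Finset.mem_range, dirChange]
    constructor
    · rintro ⟨⟨h1, h2⟩, hdc⟩
      rcases Nat.even_or_odd j with he | ho
      · right
        have he' : j % 2 = 0 := Nat.even_iff.mp he
        have ha : permVal n p j < permVal n p (j+1) := hasc j (by omega) (by omega)
        rcases hdc with ⟨_, h⟩ | ⟨h, _⟩
        · omega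
        · refine ⟨j - 1, ⟨by omega, ?_⟩, by omega⟩
          have hj : j - 1 + 1 = j := by omega
          rw [hj]; exact h
      · left
        have ho' : j % 2 = 1 := Nat.odd_iff.mp ho
        have ha : permVal n p (j-1) < permVal n p j := by
          have hj : j - 1 + 1 = j := by omega
          have h := hasc (j-1) (by omega) (by omega)
          rwa [hj] at h
        rcases hdc with ⟨_, h⟩ | ⟨h, _⟩
        · exact ⟨h2, h⟩
        · omega
    · rintro (⟨hi, hd⟩ | ⟨i, ⟨hi, hd⟩, rfl⟩)
      · have ho := hodd j (by rw [hD, Finset.mem_filter, Finset.mem_range]; exact ⟨hi, hd⟩)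
        refine ⟨⟨by omega, hi⟩, Or.inl ⟨?_, hd⟩⟩
        have hj : j - 1 + 1 = j := by omega
        have h := hasc (j-1) (by omega) (by omega)
        rwa [hj] at h
      · have ho := hodd i (by rw [hD, Finset.mem_filter, Finset.mem_range]; exact ⟨hi, hd⟩)
        have hin : i + 1 < n - 1 := by omega
        refine ⟨⟨by omega, hin⟩, Or.inr ⟨?_, hasc (i+1) (by omega) (by omega)⟩⟩
        simpa using hd
  have hdisj : Disjoint D (D.image (· + 1)) := by
    rw [Finset.disjoint_left]
    intro a ha hb
    simp only [Finset.mem_image] at hb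
    obtain ⟨b, hbD, hba⟩ := hb
    have h1 := hodd a ha
    have h2 := hodd b hbD
    omega
  have h1 : numRuns n p = 2 * numDescents n p + 1 := by
    unfold numRuns numDescents
    rw [← hD, hset, Finset.card_union_of_disjoint hdisj,
      Finset.card_image_of_injective _ (add_left_injective 1)]
    ring
  omega
end

section
/- The number of j-half-ascending permutations of {1,...,n} equals n!/2^j, for all 0 ≤ j ≤ ⌊(n−2)/2⌋. -/
open Finset

def myTau (n a : ℕ) (h1 : a < n) (h2 : a + 1 < n) : Equiv.Perm (Fin n) :=
  Equiv.swap ⟨a, h1⟩ ⟨a + 1, h2⟩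

lemma myTau_val_of_ne (n a : ℕ) (h1 : a < n) (h2 : a + 1 < n)
    (p : Equiv.Perm (Fin n)) (m : ℕ) (hm1 : m ≠ a) (hm2 : m ≠ a + 1) :
    permVal n (p * myTau n a h1 h2) m = permVal n p m := by
  unfold permVal
  split
  · next h =>
    have : myTau n a h1 h2 ⟨m, h⟩ = ⟨m, h⟩ :=
      Equiv.swap_apply_of_ne_of_ne (by simp [Fin.ext_iff]; omega)
        (by simp [Fin.ext_iff]; omega)
    simp [Equiv.Perm.mul_apply, this]
  · rfl

lemma myTau_val_left (n a : ℕ) (h1 : a < n) (h2 : a + 1 < n)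
    (p : Equiv.Perm (Fin n)) :
    permVal n (p * myTau n a h1 h2) a = permVal n p (a + 1) := by
  unfold permVal
  rw [dif_pos h1, dif_pos h2]
  simp [Equiv.Perm.mul_apply, myTau, Equiv.swap_apply_left]

lemma myTau_val_right (n a : ℕ) (h1 : a < n) (h2 : a + 1 < n)
    (p : Equiv.Perm (Fin n)) :
    permVal n (p * myTau n a h1 h2) (a + 1) = permVal n p a := by
  unfold permVal
  rw [dif_pos h2, dif_pos h1]
  simp [Equiv.Perm.mul_apply, myTau, Equiv.swap_apply_right]

lemma permVal_ne_s6 (n a : ℕ) (h1 : a < n) (h2 : a + 1 < n)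
    (p : Equiv.Perm (Fin n)) : permVal n p a ≠ permVal n p (a + 1) := by
  intro h
  unfold permVal at h
  rw [dif_pos h1, dif_pos h2] at h
  have := p.injective (Fin.val_injective h)
  simp [Fin.ext_iff] at this

lemma halfAsc_step (n k : ℕ) (hn : 2 * k + 4 ≤ n) :
    (Finset.univ.filter (HalfAscJ n k)).card =
      2 * (Finset.univ.filter (HalfAscJ n (k + 1))).card := by
  set a := n - (2 * k + 2) with ha
  have h1 : a < n := by omega
  have h2 : a + 1 < n := by omega
  set τ := myTau n a h1 h2 with hτ
  -- preservation of HalfAscJ n k under multiplication by τ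
  have hpres : ∀ p : Equiv.Perm (Fin n), HalfAscJ n k (p * τ) ↔ HalfAscJ n k p := by
    intro p
    unfold HalfAscJ
    apply forall₂_congr
    intro i hi
    simp only [Finset.mem_Icc] at hi
    rw [myTau_val_of_ne n a h1 h2 p _ (by omega) (by omega),
        myTau_val_of_ne n a h1 h2 p _ (by omega) (by omega)]
  -- splitting HalfAscJ (k+1)
  have hsplit : ∀ p : Equiv.Perm (Fin n),
      HalfAscJ n (k + 1) p ↔ HalfAscJ n k p ∧ permVal n p a < permVal n p (a + 1) := by
    intro p
    have e1 : n - 2 * (k + 1) = a := by omega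
    have e2 : n + 1 - 2 * (k + 1) = a + 1 := by omega
    constructor
    · intro h
      refine ⟨fun i hi => h i ?_, ?_⟩
      · simp only [Finset.mem_Icc] at *; omega
      · have := h (k + 1) (by simp)
        rwa [e1, e2] at this
    · rintro ⟨hp1, hp2⟩ i hi
      simp only [Finset.mem_Icc] at hi
      rcases eq_or_lt_of_le hi.2 with h | h
      · subst h
        rw [e1, e2]
        exact hp2
      · exact hp1 i (by simp only [Finset.mem_Icc]; omega)
  have hAeq : Finset.univ.filter (HalfAscJ n (k + 1)) =
      Finset.univ.filter (fun p : Equiv.Perm (Fin n) =>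
        HalfAscJ n k p ∧ permVal n p a < permVal n p (a + 1)) :=
    Finset.filter_congr (fun p _ => by rw [hsplit])
  have hcardsplit :
      (Finset.univ.filter (fun p : Equiv.Perm (Fin n) =>
        HalfAscJ n k p ∧ permVal n p a < permVal n p (a + 1))).card +
      (Finset.univ.filter (fun p : Equiv.Perm (Fin n) =>
        HalfAscJ n k p ∧ ¬ permVal n p a < permVal n p (a + 1))).card =
      (Finset.univ.filter (HalfAscJ n k)).card := by
    rw [← Finset.filter_filter, ← Finset.filter_filter]
    exact Finset.card_filter_add_card_filter_not _
  have hbij :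
      (Finset.univ.filter (fun p : Equiv.Perm (Fin n) =>
        HalfAscJ n k p ∧ permVal n p a < permVal n p (a + 1))).card =
      (Finset.univ.filter (fun p : Equiv.Perm (Fin n) =>
        HalfAscJ n k p ∧ ¬ permVal n p a < permVal n p (a + 1))).card := by
    apply Finset.card_bij' (fun p _ => p * τ) (fun p _ => p * τ)
    · intro p hp
      simp only [Finset.mem_filter, Finset.mem_univ, true_and] at hp ⊢
      refine ⟨(hpres p).mpr hp.1, ?_⟩
      rw [myTau_val_left, myTau_val_right]
      omega
    · intro p hp
      simp only [Finset.mem_filter, Finset.mem_univ, true_and] at hp ⊢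
      refine ⟨(hpres p).mpr hp.1, ?_⟩
      rw [myTau_val_left, myTau_val_right]
      have := permVal_ne_s6 n a h1 h2 p
      omega
    · intro p _
      rw [mul_assoc, hτ, myTau, Equiv.swap_mul_self, mul_one]
    · intro p _
      rw [mul_assoc, hτ, myTau, Equiv.swap_mul_self, mul_one]
  rw [hAeq, ← hcardsplit, ← hbij]
  ring

/-- the number of `j`-half-ascending permutations of `{1,...,n}` is `n!/2^j`,
for `0 ≤ j ≤ ⌊(n-2)/2⌋`. -/
theorem stmt6 (n j : ℕ) (hj : j ≤ (n - 2) / 2) :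
    (Finset.univ.filter (HalfAscJ n j)).card = Nat.factorial n / 2 ^ j := by
  have key : ∀ k, k ≤ (n - 2) / 2 →
      (Finset.univ.filter (HalfAscJ n k)).card * 2 ^ k = Nat.factorial n := by
    intro k
    induction k with
    | zero =>
      intro _
      have htriv : ∀ p : Equiv.Perm (Fin n), HalfAscJ n 0 p := by
        intro p i hi
        simp only [Finset.mem_Icc] at hi
        omega
      rw [Finset.filter_true_of_mem (fun p _ => htriv p)]
      simp [Finset.card_univ, Fintype.card_perm]
    | succ k ih =>
      intro hk1
      have hk : k ≤ (n - 2) / 2 := by omega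
      have hn : 2 * k + 4 ≤ n := by omega
      have hstep := halfAsc_step n k hn
      have := ih hk
      rw [hstep] at this
      rw [← this, pow_succ]
      ring
  exact (Nat.div_eq_of_eq_mul_left (by positivity) (key j hj).symm).symm
end

section
/- There is a bijection between permutations of {1,...,n} and labeled northeastern lattice paths with edges a₁,...,a_n and positive integer labels e₁,...,e_n satisfying: (1) a₁ is horizontal and e₁ = 1; (2) if a_i and a_{i+1} are parallel then e_i ≥ e_{i+1}; (3) if a_i and a_{i+1} are perpendicular then e_i + e_{i+1} ≤ i+1. Under this bijection, permutations with exactly k descents correspond to paths with exactly k vertical edges. -/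
open Finset

/-! Record a permutation by its prefix ranks `r_i = #{j < i | p_j < p_i} ∈ [0, i]`. Comparisons
`p_j < p_i` can be recovered from these ranks by induction on `i`, so the code is injective, and
since there are `n!` codes it is a bijection. A descent at `i` means exactly `r_{i+1} ≤ r_i`, so
the direction of every edge is determined by the code, and the labels `r + 1` (vertical) and
`i + 1 - r` (horizontal) encode `r`. Conditions (2) and (3) on consecutive edges are then
elementary inequalities between consecutive ranks, and conversely they force the direction of each
edge to be the one read off from the decoded ranks.
-/

section PrefixRank

variable {ι β : Type*} [LinearOrder ι] [Fintype ι] [LinearOrder β]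

/-- For a permutation, `prefixRank p i + 1` is the paper's `q_i`, the last letter of the
standardization of `p_1, …, p_i`. -/
def prefixRank (f : ι → β) (i : ι) : ℕ := #{j | j < i ∧ f j < f i}

lemma prefixRank_le {n : ℕ} (f : Fin n → β) (i : Fin n) : prefixRank f i ≤ i := by
  calc prefixRank f i ≤ #(Iio i) := card_le_card fun j hj => by simp_all
    _ = i := Fin.card_Iio i

lemma lt_iff_card_le_prefixRank {f : ι → β} (hf : Function.Injective f) {i j : ι} (hji : j < i) :
    f j < f i ↔ #{k | k < i ∧ f k ≤ f j} ≤ prefixRank f i := by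
  constructor
  · intro hlt
    refine card_le_card fun k hk => ?_
    simp only [mem_filter, mem_univ, true_and] at hk ⊢
    exact ⟨hk.1, hk.2.trans_lt hlt⟩
  · intro hle
    by_contra! hgt
    have hsub : univ.filter (fun k => k < i ∧ f k < f i) ⊂
        univ.filter (fun k => k < i ∧ f k ≤ f j) := by
      refine ssubset_iff_of_subset (fun k hk => ?_) |>.2 ⟨j, by simp [hji], ?_⟩
      · simp only [mem_filter, mem_univ, true_and] at hk ⊢
        exact ⟨hk.1, hk.2.le.trans hgt⟩
      · simp [(hgt.lt_of_ne (hf.ne hji.ne')).not_gt]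
    exact (card_lt_card hsub).not_ge hle

lemma lt_iff_prefixRank_lt_of_covBy {f : ι → β} (hf : Function.Injective f) {i j : ι}
    (hji : j ⋖ i) :
    f j < f i ↔ prefixRank f j < prefixRank f i := by
  have hset : univ.filter (fun k => k < i ∧ f k ≤ f j) =
      insert j (univ.filter fun k => k < j ∧ f k < f j) := by
    ext k
    simp only [mem_filter, mem_univ, true_and, mem_insert]
    rcases lt_trichotomy k j with hkj | rfl | hjk
    · simp [hkj, hkj.trans hji.lt, hkj.ne, le_iff_lt_or_eq, hf.eq_iff]
    · simp [hji.lt]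
    · simp [hjk.ne', hjk.not_gt, hji.2 hjk]
  rw [lt_iff_card_le_prefixRank hf hji.lt, hset, card_insert_of_notMem (by simp)]
  exact Nat.add_one_le_iff

lemma lt_iff_lt_of_prefixRank_eq {f g : ι → β} (hf : Function.Injective f)
    (hg : Function.Injective g) (h : prefixRank f = prefixRank g) (i j : ι) :
    f j < f i ↔ g j < g i := by
  suffices below : ∀ i j, j < i → (f j < f i ↔ g j < g i) by
    rcases lt_trichotomy j i with hji | rfl | hij
    · exact below i j hji
    · simp
    · rw [← not_iff_not, not_lt, not_lt, (hf.ne hij.ne).le_iff_lt, (hg.ne hij.ne).le_iff_lt]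
      exact below j i hij
  intro i
  induction i using WellFoundedLT.induction with
  | _ i ih =>
    intro j hji
    have hset : univ.filter (fun k => k < i ∧ f k ≤ f j) =
        univ.filter fun k => k < i ∧ g k ≤ g j := by
      refine filter_congr fun k _ => and_congr_right fun hki => ?_
      rcases lt_trichotomy k j with hkj | rfl | hjk
      · rw [(hf.ne hkj.ne).le_iff_lt, (hg.ne hkj.ne).le_iff_lt]
        exact ih j hji k hkj
      · simp
      · rw [← not_lt, ← not_lt, ih k hki j hjk]
    rw [lt_iff_card_le_prefixRank hf hji, lt_iff_card_le_prefixRank hg hji, hset, h]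

lemma Equiv.Perm.eq_of_forall_lt_iff {p q : Equiv.Perm ι} (h : ∀ i j, p j < p i ↔ q j < q i) :
    p = q := by
  let σ : ι ≃o ι := ⟨p.symm.trans q, fun {a b} => by
    simpa [not_lt] using (h (p.symm a) (p.symm b)).not.symm⟩
  ext i
  simpa [σ] using (congrArg (· (p i)) (Subsingleton.elim σ (OrderIso.refl ι))).symm

end PrefixRank

section LatticePath

variable {n : ℕ}

abbrev RankCode (n : ℕ) := ∀ i : Fin n, Fin (i.val + 1)

def prefixRankCode (p : Equiv.Perm (Fin n)) : RankCode n :=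
  fun i => ⟨prefixRank p i, Nat.lt_succ_of_le (prefixRank_le p i)⟩

@[simp]
lemma val_prefixRankCode (p : Equiv.Perm (Fin n)) (i : Fin n) :
    (prefixRankCode p i : ℕ) = prefixRank p i := rfl

lemma prefixRankCode_injective : Function.Injective (prefixRankCode (n := n)) := by
  intro p q h
  refine Equiv.Perm.eq_of_forall_lt_iff (lt_iff_lt_of_prefixRank_eq p.injective q.injective ?_)
  funext i
  simpa using congrArg Fin.val (congrFun h i)

lemma card_rankCode (n : ℕ) : Fintype.card (RankCode n) = n.factorial := by
  rw [Fintype.card_pi]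
  simp only [Fintype.card_fin]
  rw [Fin.prod_univ_eq_prod_range (· + 1), prod_range_add_one_eq_factorial]

lemma prefixRankCode_bijective : Function.Bijective (prefixRankCode (n := n)) := by
  rw [Fintype.bijective_iff_injective_and_card, card_rankCode, Fintype.card_perm, Fintype.card_fin]
  exact ⟨prefixRankCode_injective, rfl⟩

/-- At the `0`-indexed edge `i`, with `q = r + 1`, these are the paper's labels `q` and
`(i + 1) + 1 - q` of its edge `a_{i+1}`. -/
def edgeLabel (i r : ℕ) (vertical : Bool) : ℕ := if vertical then r + 1 else i + 1 - r

def edgeCode (i : ℕ) (edge : Bool × ℕ) : ℕ := if edge.1 then edge.2 - 1 else i + 1 - edge.2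

lemma edgeCode_edgeLabel {i r : ℕ} (hr : r ≤ i) (v : Bool) :
    edgeCode i (v, edgeLabel i r v) = r := by
  cases v <;> simp [edgeCode, edgeLabel]; omega

lemma edgeLabel_edgeCode {i : ℕ} {edge : Bool × ℕ} (h₁ : 1 ≤ edge.2) (h₂ : edge.2 ≤ i + 1) :
    edgeLabel i (edgeCode i edge) edge.1 = edge.2 := by
  obtain ⟨_ | _, e⟩ := edge <;> simp_all [edgeCode, edgeLabel]; omega

def isVertical (q : RankCode n) : Fin n → Bool
  | ⟨0, _⟩ => false
  | ⟨k + 1, h⟩ => decide ((q ⟨k + 1, h⟩ : ℕ) ≤ q ⟨k, Nat.lt_of_succ_lt h⟩)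

@[simp]
lemma isVertical_zero (q : RankCode (n + 1)) : isVertical q 0 = false := rfl

lemma isVertical_succ (q : RankCode (n + 1)) (i : Fin n) :
    isVertical q i.succ = decide ((q i.succ : ℕ) ≤ q i.castSucc) := rfl

def codeToPath (q : RankCode n) (i : Fin n) : Bool × ℕ :=
  (isVertical q i, edgeLabel i (q i) (isVertical q i))

lemma edgeLabel_step (v : Bool) {i r s : ℕ} (hr : r ≤ i) (hs : s ≤ i + 1) :
    (v = decide (s ≤ r) → edgeLabel (i + 1) s (decide (s ≤ r)) ≤ edgeLabel i r v) ∧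
    (v ≠ decide (s ≤ r) → edgeLabel i r v + edgeLabel (i + 1) s (decide (s ≤ r)) ≤ i + 2) := by
  by_cases hsr : s ≤ r <;> cases v <;> simp [edgeLabel, hsr] <;> omega

lemma isLPath_codeToPath (q : RankCode n) : IsLPath n (codeToPath q) := by
  refine ⟨fun i => ?_, fun h => ⟨rfl, ?_⟩, fun i h => edgeLabel_step _ (q _).is_le (q _).is_le⟩
  · have := (q i).is_le
    unfold codeToPath edgeLabel
    split <;> omega
  · have := (q ⟨0, h⟩).is_le
    simp [codeToPath, isVertical, edgeLabel]

lemma label_le_of_isLPath {f : Fin n → Bool × ℕ} (hf : IsLPath n f) (i : Fin n) :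
    (f i).2 ≤ i + 1 := by
  obtain ⟨i, hi⟩ := i
  induction i with
  | zero => exact ((hf.2.1 hi).2).le
  | succ k ih =>
    have := ih (Nat.lt_of_succ_lt hi)
    have := hf.1 ⟨k, Nat.lt_of_succ_lt hi⟩
    have := hf.2.2 k hi
    by_cases hpar : (f ⟨k, Nat.lt_of_succ_lt hi⟩).1 = (f ⟨k + 1, hi⟩).1 <;> simp_all <;> omega

lemma vertical_iff_edgeCode_le {i : ℕ} {x y : Bool × ℕ} (hx : 1 ≤ x.2) (hx' : x.2 ≤ i + 1)
    (hy : 1 ≤ y.2) (hy' : y.2 ≤ i + 2) (hpar : x.1 = y.1 → y.2 ≤ x.2)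
    (hperp : x.1 ≠ y.1 → x.2 + y.2 ≤ i + 2) :
    y.1 = decide (edgeCode (i + 1) y ≤ edgeCode i x) := by
  obtain ⟨_ | _, a⟩ := x <;> obtain ⟨_ | _, b⟩ := y <;> simp_all [edgeCode] <;> omega

def pathToCode (f : {f : Fin n → Bool × ℕ // IsLPath n f}) : RankCode n := fun i =>
  ⟨edgeCode i (f.1 i), by
    have := label_le_of_isLPath f.2 i
    have := f.2.1 i
    unfold edgeCode; split <;> omega⟩

def pathEquiv (n : ℕ) : RankCode n ≃ {f : Fin n → Bool × ℕ // IsLPath n f} where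
  toFun q := ⟨codeToPath q, isLPath_codeToPath q⟩
  invFun := pathToCode
  left_inv q := funext fun i => Fin.ext (edgeCode_edgeLabel (q i).is_le _)
  right_inv := by
    rintro ⟨f, hf⟩
    have hdir : ∀ i, isVertical (pathToCode ⟨f, hf⟩) i = (f i).1 := by
      rintro ⟨_ | k, hk⟩
      · exact (hf.2.1 hk).1.symm
      · exact (vertical_iff_edgeCode_le (hf.1 _) (label_le_of_isLPath hf _) (hf.1 _)
          (label_le_of_isLPath hf _) (hf.2.2 k hk).1 (hf.2.2 k hk).2).symm
    refine Subtype.ext (funext fun i => Prod.ext (hdir i) ?_)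
    simp only [codeToPath, hdir]
    exact edgeLabel_edgeCode (hf.1 i) (label_le_of_isLPath hf i)

lemma Fin.castSucc_covBy_succ {m : ℕ} (i : Fin m) : i.castSucc ⋖ i.succ :=
  ⟨Fin.castSucc_lt_succ, fun c h₁ h₂ => by rw [Fin.lt_def] at h₁ h₂; simp at h₁ h₂; omega⟩

lemma succ_lt_castSucc_iff_isVertical (p : Equiv.Perm (Fin (n + 1))) (i : Fin n) :
    p i.succ < p i.castSucc ↔ isVertical (prefixRankCode p) i.succ := by
  rw [isVertical_succ, decide_eq_true_iff, val_prefixRankCode, val_prefixRankCode, ← not_lt,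
    ← lt_iff_prefixRank_lt_of_covBy p.injective i.castSucc_covBy_succ, not_lt]
  exact (p.injective.ne i.castSucc_covBy_succ.lt.ne').le_iff_lt.symm

lemma numDescents_eq_vertCount (p : Equiv.Perm (Fin n)) :
    numDescents n p = vertCount n (codeToPath (prefixRankCode p)) := by
  cases n with
  | zero => rfl
  | succ m =>
    have hdesc (i : Fin m) : permVal (m + 1) p (i + 1) < permVal (m + 1) p i ↔
        isVertical (prefixRankCode p) i.succ := by
      rw [permVal, permVal, dif_pos (by omega), dif_pos (by omega)]
      exact succ_lt_castSucc_iff_isVertical p i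
    rw [numDescents, vertCount, Fin.card_filter_univ_succ, if_neg (by simp [codeToPath]),
      card_filter, Nat.add_sub_cancel, ← Fin.sum_univ_eq_sum_range]
    simp only [codeToPath, hdesc]
    exact (card_filter _ _).symm

end LatticePath

/-- there is a bijection between permutations of `{1,...,n}` and labeled
northeastern lattice paths in `𝒫(n)`, under which permutations with exactly `k` descents
correspond to paths with exactly `k` vertical edges. -/
theorem stmt7 (n : ℕ) :
    ∃ e : Equiv.Perm (Fin n) ≃ {f : Fin n → Bool × ℕ // IsLPath n f},
      ∀ p : Equiv.Perm (Fin n), numDescents n p = vertCount n (e p).1 :=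
  ⟨(Equiv.ofBijective _ prefixRankCode_bijective).trans (pathEquiv n), numDescents_eq_vertCount⟩
end

section
/- For all n ≥ 1 and 1 ≤ k ≤ n−1, the Eulerian numbers satisfy A(n,k−1)·A(n,k+1) ≤ A(n,k)², where A(n,k) is the number of permutations of {1,...,n} with exactly k descents. -/
open Finset

namespace Stmt9Aux

open Equiv

variable {n : ℕ}

lemma permVal_of_lt {q : Perm (Fin n)} {i : ℕ} (h : i < n) :
    permVal n q i = (q ⟨i, h⟩ : ℕ) := dif_pos h

lemma permVal_lt_n {q : Perm (Fin n)} {i : ℕ} (h : i < n) :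
    permVal n q i < n := by
  rw [permVal_of_lt h]; exact (q ⟨i, h⟩).isLt

/-- Lift a permutation of `Fin n` to `Fin (n+1)` fixing the last element. -/
def lift (q : Perm (Fin n)) : Perm (Fin (n+1)) :=
  finSuccEquivLast.symm.permCongr q.optionCongr

lemma lift_apply (q : Perm (Fin n)) (x : Fin (n+1)) :
    lift q x = finSuccEquivLast.symm ((finSuccEquivLast x).map q) := by
  simp [lift, Equiv.permCongr_apply]

lemma lift_castSucc (q : Perm (Fin n)) (i : Fin n) :
    lift q i.castSucc = (q i).castSucc := by
  simp [lift_apply]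

lemma lift_last (q : Perm (Fin n)) : lift q (Fin.last n) = Fin.last n := by
  simp [lift_apply]

lemma lift_injective : Function.Injective (lift (n := n)) := by
  intro q1 q2 h
  ext i
  have := congrArg (fun σ : Perm (Fin (n+1)) => σ i.castSucc) h
  have h2 : q1 i = q2 i := by simpa [lift_castSucc, Fin.castSucc_inj] using this
  rw [h2]

/-- The positional cycle: sends `j ↦ last`, fixes `i < j`, shifts `i > j` down by one. -/
def cyc (j : Fin (n+1)) : Perm (Fin (n+1)) :=
  Fin.revPerm * Fin.cycleRange j.rev * Fin.revPerm

lemma cyc_apply (j i : Fin (n+1)) : cyc j i = (Fin.cycleRange j.rev i.rev).rev := rfl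

lemma cyc_of_lt {i j : Fin (n+1)} (h : i < j) : cyc j i = i := by
  rw [cyc_apply, Fin.cycleRange_of_gt (Fin.rev_lt_rev.mpr h), Fin.rev_rev]

lemma cyc_self (j : Fin (n+1)) : cyc j j = Fin.last n := by
  rw [cyc_apply, Fin.cycleRange_self, Fin.rev_zero]

lemma cyc_val_of_gt {i j : Fin (n+1)} (h : j < i) : (cyc j i : ℕ) = (i : ℕ) - 1 := by
  rw [cyc_apply]
  have h1 : i.rev < j.rev := Fin.rev_lt_rev.mpr h
  rw [Fin.cycleRange_of_lt h1, Fin.val_rev]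
  have hle : (j.rev : ℕ) ≤ n := j.rev.is_le
  have h2 : (i.rev + 1 : Fin (n+1)) = (⟨(i.rev : ℕ) + 1, by omega⟩ : Fin (n+1)) := by
    apply Fin.ext
    rw [Fin.val_add_one_of_lt]
    rw [Fin.lt_iff_val_lt_val, Fin.val_last]
    have := h1
    rw [Fin.lt_iff_val_lt_val] at this
    omega
  rw [h2]
  simp only [Fin.val_rev]
  have hi : (i : ℕ) ≤ n := i.is_le
  have hij : (j : ℕ) < (i : ℕ) := h
  omega


/-- Insertion of the value `n` at position `j`. -/
def Phi (q : Perm (Fin n)) (j : Fin (n+1)) : Perm (Fin (n+1)) := lift q * cyc j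

lemma permVal_Phi_of_lt {q : Perm (Fin n)} {j : Fin (n+1)} {i : ℕ} (h : i < (j : ℕ)) :
    permVal (n+1) (Phi q j) i = permVal n q i := by
  have hin : i < n := by have := j.is_le; omega
  have hin1 : i < n + 1 := by omega
  rw [permVal_of_lt hin1, permVal_of_lt hin]
  have hc : cyc j ⟨i, hin1⟩ = ⟨i, hin1⟩ := cyc_of_lt (by rw [Fin.lt_iff_val_lt_val]; exact h)
  have hcs : (⟨i, hin1⟩ : Fin (n+1)) = Fin.castSucc ⟨i, hin⟩ := rfl
  rw [Phi, Equiv.Perm.mul_apply, hc, hcs, lift_castSucc]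
  rfl

lemma permVal_Phi_self {q : Perm (Fin n)} {j : Fin (n+1)} :
    permVal (n+1) (Phi q j) (j : ℕ) = n := by
  rw [permVal_of_lt j.isLt]
  have : (⟨(j:ℕ), j.isLt⟩ : Fin (n+1)) = j := rfl
  rw [this, Phi, Equiv.Perm.mul_apply, cyc_self, lift_last, Fin.val_last]

lemma permVal_Phi_of_gt {q : Perm (Fin n)} {j : Fin (n+1)} {i : ℕ} (h : (j : ℕ) < i)
    (h2 : i ≤ n) : permVal (n+1) (Phi q j) i = permVal n q (i - 1) := by
  have hin1 : i < n + 1 := by omega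
  have hin : i - 1 < n := by omega
  rw [permVal_of_lt hin1, permVal_of_lt hin]
  have hc : cyc j ⟨i, hin1⟩ = Fin.castSucc ⟨i - 1, hin⟩ := by
    apply Fin.ext
    rw [cyc_val_of_gt (by rw [Fin.lt_iff_val_lt_val]; exact h)]
    rfl
  rw [Phi, Equiv.Perm.mul_apply, hc, lift_castSucc]
  rfl


def descSet (n : ℕ) (q : Perm (Fin n)) : Finset ℕ :=
  (Finset.range (n-1)).filter (fun i => permVal n q (i+1) < permVal n q i)

lemma numDescents_eq (q : Perm (Fin n)) : numDescents n q = (descSet n q).card := rfl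

lemma descSet_Phi (q : Perm (Fin n)) (j : Fin (n+1)) :
    descSet (n+1) (Phi q j) =
      ((descSet n q).filter (fun a => a + 1 ≠ (j:ℕ))).image
          (fun a => if a < (j:ℕ) then a else a + 1)
        ∪ (if (j:ℕ) < n then {(j:ℕ)} else ∅) := by
  have hm : (j : ℕ) ≤ n := j.is_le
  set m := (j : ℕ) with hmdef
  have hsec : ∀ i : ℕ, (i ∈ (if m < n then ({m} : Finset ℕ) else ∅)) ↔ (m < n ∧ i = m) := by
    intro i; split_ifs with h
    · simp [h]
    · simp [h]
  ext i
  simp only [descSet, mem_union, mem_image, mem_filter, mem_range, Nat.add_sub_cancel, hsec i]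
  rcases Nat.lt_trichotomy i m with hi | hi | hi
  · by_cases h2 : i + 1 < m
    · have e1 : permVal (n+1) (Phi q j) i = permVal n q i := permVal_Phi_of_lt hi
      have e2 : permVal (n+1) (Phi q j) (i+1) = permVal n q (i+1) := permVal_Phi_of_lt h2
      rw [e1, e2]
      constructor
      · rintro ⟨hlt, hd⟩
        exact Or.inl ⟨i, ⟨⟨by omega, hd⟩, by omega⟩, by simp [hi]⟩
      · rintro (⟨a, ⟨⟨ha1, ha2⟩, ha3⟩, ha4⟩ | ⟨h5, h6⟩)
        · by_cases haa : a < m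
          · simp only [if_pos haa] at ha4
            subst ha4
            exact ⟨by omega, ha2⟩
          · simp only [if_neg haa] at ha4
            omega
        · omega
    · have h3 : i + 1 = m := by omega
      have e2 : permVal (n+1) (Phi q j) (i+1) = n := by rw [h3]; exact permVal_Phi_self
      have e1 : permVal (n+1) (Phi q j) i = permVal n q i := permVal_Phi_of_lt hi
      rw [e1, e2]
      have hvn : permVal n q i < n := permVal_lt_n (by omega)
      constructor
      · rintro ⟨hlt, hd⟩; omega
      · rintro (⟨a, ⟨⟨ha1, ha2⟩, ha3⟩, ha4⟩ | ⟨h5, h6⟩)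
        · by_cases haa : a < m
          · simp only [if_pos haa] at ha4; omega
          · simp only [if_neg haa] at ha4; omega
        · omega
  · subst hi
    by_cases hmn : m < n
    · have e1 : permVal (n+1) (Phi q j) m = n := permVal_Phi_self
      have e2 : permVal (n+1) (Phi q j) (m+1) = permVal n q m :=
        permVal_Phi_of_gt (by omega) (by omega)
      rw [e1, e2]
      have hvn : permVal n q m < n := permVal_lt_n hmn
      constructor
      · intro _; exact Or.inr ⟨hmn, rfl⟩
      · intro _; exact ⟨hmn, hvn⟩
    · constructor
      · rintro ⟨hlt, hd⟩; omega
      · rintro (⟨a, ⟨⟨ha1, ha2⟩, ha3⟩, ha4⟩ | ⟨h5, h6⟩)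
        · by_cases haa : a < m
          · simp only [if_pos haa] at ha4; omega
          · simp only [if_neg haa] at ha4; omega
        · omega
  · by_cases hin : i < n
    · have e1 : permVal (n+1) (Phi q j) i = permVal n q (i-1) :=
        permVal_Phi_of_gt hi (by omega)
      have e2 : permVal (n+1) (Phi q j) (i+1) = permVal n q i :=
        permVal_Phi_of_gt (by omega) (by omega)
      rw [e1, e2]
      have hii : i - 1 + 1 = i := by omega
      constructor
      · rintro ⟨hlt, hd⟩
        refine Or.inl ⟨i - 1, ⟨⟨by omega, by rw [hii]; exact hd⟩, by omega⟩, ?_⟩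
        simp only [if_neg (by omega : ¬ i - 1 < m)]
        omega
      · rintro (⟨a, ⟨⟨ha1, ha2⟩, ha3⟩, ha4⟩ | ⟨h5, h6⟩)
        · by_cases haa : a < m
          · simp only [if_pos haa] at ha4; omega
          · simp only [if_neg haa] at ha4
            have : a = i - 1 := by omega
            subst this
            rw [hii] at ha2
            exact ⟨hin, ha2⟩
        · omega
    · constructor
      · rintro ⟨hlt, hd⟩; omega
      · rintro (⟨a, ⟨⟨ha1, ha2⟩, ha3⟩, ha4⟩ | ⟨h5, h6⟩)
        · by_cases haa : a < m
          · simp only [if_pos haa] at ha4; omega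
          · simp only [if_neg haa] at ha4; omega
        · omega


def badSet (n : ℕ) (q : Perm (Fin n)) : Finset ℕ := insert n ((descSet n q).image (· + 1))

lemma mem_descSet_lt {q : Perm (Fin n)} {a : ℕ} (h : a ∈ descSet n q) : a < n - 1 :=
  mem_range.mp (mem_filter.mp h).1

lemma card_badSet (q : Perm (Fin n)) : (badSet n q).card = numDescents n q + 1 := by
  rw [badSet, card_insert_of_notMem, card_image_of_injective _ (add_left_injective 1),
    numDescents_eq]
  simp only [mem_image, not_exists]
  intro a
  rintro ⟨ha, hfa⟩
  have := mem_descSet_lt ha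
  omega

lemma numDescents_Phi (q : Perm (Fin n)) (j : Fin (n+1)) :
    numDescents (n+1) (Phi q j) =
      if (j:ℕ) ∈ badSet n q then numDescents n q else numDescents n q + 1 := by
  rw [numDescents_eq, descSet_Phi]
  have hm : (j:ℕ) ≤ n := j.is_le
  set m := (j : ℕ) with hmdef
  have hginj : Function.Injective (fun a => if a < m then a else a + 1) := by
    intro a b hab
    simp only at hab
    split_ifs at hab <;> omega
  have hdisj : Disjoint (((descSet n q).filter (fun a => a + 1 ≠ m)).image
      (fun a => if a < m then a else a + 1)) (if m < n then ({m} : Finset ℕ) else ∅) := by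
    split_ifs with h
    · rw [disjoint_singleton_right]
      simp only [mem_image, mem_filter, not_exists]
      rintro a ⟨⟨ha, hne⟩, hfa⟩
      by_cases h1 : a < m
      · simp only [if_pos h1] at hfa; omega
      · simp only [if_neg h1] at hfa; omega
    · exact disjoint_empty_right _
  rw [card_union_of_disjoint hdisj, card_image_of_injective _ hginj]
  by_cases h1 : m = n
  · have hfil : (descSet n q).filter (fun a => a + 1 ≠ m) = descSet n q := by
      apply filter_true_of_mem
      intro a ha
      have := mem_descSet_lt ha
      omega
    have : ¬ m < n := by omega
    rw [hfil, if_neg this, if_pos (by rw [badSet]; exact mem_insert.mpr (Or.inl h1)),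
      numDescents_eq, card_empty]
    omega
  · have hmn : m < n := by omega
    by_cases h2 : ∃ a ∈ descSet n q, a + 1 = m
    · obtain ⟨a0, ha0, ha0m⟩ := h2
      have hfil : (descSet n q).filter (fun a => a + 1 ≠ m) = (descSet n q).erase a0 := by
        ext x
        simp only [mem_filter, mem_erase]
        constructor
        · rintro ⟨hx, hne⟩; exact ⟨by omega, hx⟩
        · rintro ⟨hne, hx⟩; exact ⟨hx, by omega⟩
      have hpos : 0 < (descSet n q).card := card_pos.mpr ⟨a0, ha0⟩
      have hmem : m ∈ badSet n q := by
        rw [badSet]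
        exact mem_insert_of_mem (mem_image.mpr ⟨a0, ha0, ha0m⟩)
      rw [hfil, card_erase_of_mem ha0, if_pos hmn, if_pos hmem, numDescents_eq,
        card_singleton]
      omega
    · push_neg at h2
      have hfil : (descSet n q).filter (fun a => a + 1 ≠ m) = descSet n q :=
        filter_true_of_mem (fun a ha => h2 a ha)
      have hmem : m ∉ badSet n q := by
        rw [badSet]
        simp only [mem_insert, mem_image, not_or, not_exists]
        exact ⟨h1, fun a => by rintro ⟨ha, hfa⟩; exact (h2 a ha) hfa⟩
      rw [hfil, if_pos hmn, if_neg hmem, numDescents_eq, card_singleton]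

lemma card_fiber (q : Perm (Fin n)) (k : ℕ) :
    (univ.filter (fun j : Fin (n+1) => numDescents (n+1) (Phi q j) = k)).card =
      if k = numDescents n q then numDescents n q + 1
      else if k = numDescents n q + 1 then n - numDescents n q else 0 := by
  set d := numDescents n q with hd
  have hb : ∀ j : Fin (n+1), numDescents (n+1) (Phi q j) =
      (if (j:ℕ) ∈ badSet n q then d else d+1) := fun j => numDescents_Phi q j
  have hcard1 : (univ.filter (fun j : Fin (n+1) => (j:ℕ) ∈ badSet n q)).card = d + 1 := by
    rw [← card_badSet q]
    apply card_bij (fun (j : Fin (n+1)) _ => (j : ℕ))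
    · intro j hj
      exact (mem_filter.mp hj).2
    · intro a ha b hb hab
      exact Fin.val_injective hab
    · intro b hbmem
      have hbn : b < n + 1 := by
        rw [badSet] at hbmem
        rcases mem_insert.mp hbmem with h | h
        · omega
        · obtain ⟨a, ha, hfa⟩ := mem_image.mp h
          have := mem_descSet_lt ha
          omega
      exact ⟨⟨b, hbn⟩, mem_filter.mpr ⟨mem_univ _, hbmem⟩, rfl⟩
  split_ifs with h1 h2
  · subst h1
    rw [← hcard1]
    congr 1
    apply filter_congr
    intro j _
    rw [hb j]
    split_ifs with hj <;> simp [hj]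
  · subst h2
    have hfilnot : (univ.filter (fun j : Fin (n+1) => numDescents (n+1) (Phi q j) = d + 1)) =
        (univ.filter (fun j : Fin (n+1) => ¬ ((j:ℕ) ∈ badSet n q))) := by
      apply filter_congr
      intro j _
      rw [hb j]
      split_ifs with hj <;> simp [hj]
    have hsum := card_filter_add_card_filter_not
      (s := (univ : Finset (Fin (n+1)))) (p := fun j : Fin (n+1) => (j:ℕ) ∈ badSet n q)
    rw [hfilnot]
    rw [hcard1] at hsum
    have : (univ : Finset (Fin (n+1))).card = n + 1 := by simp
    omega
  · rw [card_eq_zero, filter_eq_empty_iff]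
    intro j _
    rw [hb j]
    split_ifs with hj <;> omega


lemma Phi_inj : Function.Injective (fun qj : Perm (Fin n) × Fin (n+1) => Phi qj.1 qj.2) := by
  rintro ⟨q1, j1⟩ ⟨q2, j2⟩ h
  simp only at h
  have hlast : ∀ (q : Perm (Fin n)) (j : Fin (n+1)), (Phi q j) j = Fin.last n := by
    intro q j; rw [Phi, Equiv.Perm.mul_apply, cyc_self, lift_last]
  have h1 : (Phi q1 j1).symm (Fin.last n) = j1 := (Equiv.symm_apply_eq _).mpr (hlast q1 j1).symm
  have h2 : (Phi q2 j2).symm (Fin.last n) = j2 := (Equiv.symm_apply_eq _).mpr (hlast q2 j2).symm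
  rw [h] at h1
  have hj : j1 = j2 := h1.symm.trans h2
  subst hj
  simp only [Phi] at h
  have hq : q1 = q2 := lift_injective (mul_right_cancel h)
  rw [hq]

lemma Phi_bij : Function.Bijective (fun qj : Perm (Fin n) × Fin (n+1) => Phi qj.1 qj.2) := by
  rw [Fintype.bijective_iff_injective_and_card]
  refine ⟨Phi_inj, ?_⟩
  simp only [Fintype.card_prod, Fintype.card_perm, Fintype.card_fin, Nat.factorial_succ]
  ring

lemma A_succ_eq_sum (K : ℕ) :
    A (n+1) K = ∑ q : Perm (Fin n),
      (univ.filter (fun j : Fin (n+1) => numDescents (n+1) (Phi q j) = K)).card := by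
  rw [A]
  have h1 : (univ.filter (fun qj : Perm (Fin n) × Fin (n+1) =>
          numDescents (n+1) (Phi qj.1 qj.2) = K)).card
      = (univ.filter (fun p : Equiv.Perm (Fin (n+1)) => numDescents (n+1) p = K)).card := by
    apply card_bij (fun qj _ => Phi qj.1 qj.2)
    · intro qj hqj; exact mem_filter.mpr ⟨mem_univ _, (mem_filter.mp hqj).2⟩
    · intro a ha b hb hab; exact Phi_inj hab
    · intro p hp
      obtain ⟨qj, hqj⟩ := Phi_bij.2 p
      exact ⟨qj, mem_filter.mpr ⟨mem_univ _,
        by rw [show Phi qj.1 qj.2 = p from hqj]; exact (mem_filter.mp hp).2⟩, hqj⟩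
  rw [← h1, card_filter, Fintype.sum_prod_type]
  exact Finset.sum_congr rfl (fun q _ => (card_filter _ _).symm)

lemma A_succ_succ (k : ℕ) :
    A (n+1) (k+1) = (k+2) * A n (k+1) + (n - k) * A n k := by
  rw [A_succ_eq_sum]
  have hq : ∀ q : Perm (Fin n),
      (univ.filter (fun j : Fin (n+1) => numDescents (n+1) (Phi q j) = k+1)).card =
        (if numDescents n q = k+1 then k+2 else 0) +
        (if numDescents n q = k then n - k else 0) := by
    intro q
    rw [card_fiber]
    split_ifs <;> first | omega | exact absurd ‹False› not_false
  rw [Finset.sum_congr rfl (fun q _ => hq q), Finset.sum_add_distrib]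
  congr 1
  · rw [A, ← Finset.sum_filter, Finset.sum_const, smul_eq_mul, mul_comm]
  · rw [A, ← Finset.sum_filter, Finset.sum_const, smul_eq_mul, mul_comm]

lemma A_succ_zero : A (n+1) 0 = A n 0 := by
  rw [A_succ_eq_sum]
  have hq : ∀ q : Perm (Fin n),
      (univ.filter (fun j : Fin (n+1) => numDescents (n+1) (Phi q j) = 0)).card =
        (if numDescents n q = 0 then 1 else 0) := by
    intro q
    rw [card_fiber]
    split_ifs <;> first | omega | exact absurd ‹False› not_false
  rw [Finset.sum_congr rfl (fun q _ => hq q), A, ← Finset.sum_filter, Finset.sum_const,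
    smul_eq_mul, mul_one]


lemma numDescents_le (p : Perm (Fin n)) : numDescents n p ≤ n - 1 := by
  rw [numDescents]
  exact (card_filter_le _ _).trans (by rw [card_range])

lemma A_eq_zero {k : ℕ} (h : n ≤ k) (h1 : 1 ≤ k) : A n k = 0 := by
  rw [A, card_eq_zero, filter_eq_empty_iff]
  intro p _
  have := numDescents_le p
  omega

lemma A_one_zero : A 1 0 = 1 := by
  rw [A]
  have hz : ∀ p : Perm (Fin 1), numDescents 1 p = 0 := by
    intro p; rw [numDescents]; simp
  rw [filter_true_of_mem (fun p _ => hz p), Finset.card_univ]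
  simp [Fintype.card_perm]

lemma A_pos : ∀ n k : ℕ, k + 1 ≤ n → 0 < A n k := by
  intro n
  induction n with
  | zero => intro k h; omega
  | succ n ih =>
    intro k h
    cases k with
    | zero =>
      cases n with
      | zero => rw [A_one_zero]; omega
      | succ n' =>
        rw [A_succ_zero]
        exact ih 0 (by omega)
    | succ m =>
      rw [A_succ_succ]
      have h1 : 0 < A n m := ih m (by omega)
      have h2 : 1 ≤ n - m := by omega
      have h3 : 0 < (n - m) * A n m := Nat.mul_pos h2 h1
      omega

lemma LC : ∀ n k : ℕ, 1 ≤ k → A n (k-1) * A n (k+1) ≤ A n k ^ 2 := by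
  intro n
  induction n with
  | zero =>
    intro k hk
    rw [A_eq_zero (n := 0) (k := k+1) (by omega) (by omega), mul_zero]
    exact Nat.zero_le _
  | succ n ih =>
    intro k hk
    by_cases hkn : n ≤ k
    · rw [A_eq_zero (n := n+1) (k := k+1) (by omega) (by omega), mul_zero]
      exact Nat.zero_le _
    · have hchain : ∀ m : ℕ, A n m * A n (m+3) ≤ A n (m+1) * A n (m+2) := by
        intro m
        by_cases h3 : A n (m+3) = 0
        · rw [h3, mul_zero]; exact Nat.zero_le _
        · have hm4 : m + 4 ≤ n := by
            by_contra hcon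
            exact h3 (A_eq_zero (by omega) (by omega))
          have h1 : A n (m+1) * A n (m+3) ≤ A n (m+2)^2 := by
            simpa using ih (m+2) (by omega)
          have h2 : A n m * A n (m+2) ≤ A n (m+1)^2 := by
            simpa using ih (m+1) (by omega)
          have hp1 : 0 < A n (m+1) := A_pos n (m+1) (by omega)
          have hp2 : 0 < A n (m+2) := A_pos n (m+2) (by omega)
          have hmul : (A n m * A n (m+3)) * (A n (m+1) * A n (m+2)) ≤
              (A n (m+1) * A n (m+2)) * (A n (m+1) * A n (m+2)) := by
            calc (A n m * A n (m+3)) * (A n (m+1) * A n (m+2))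
                = (A n m * A n (m+2)) * (A n (m+1) * A n (m+3)) := by ring
              _ ≤ (A n (m+1)^2) * (A n (m+2)^2) := Nat.mul_le_mul h2 h1
              _ = (A n (m+1) * A n (m+2)) * (A n (m+1) * A n (m+2)) := by ring
          exact Nat.le_of_mul_le_mul_right hmul (Nat.mul_pos hp1 hp2)
      obtain rfl | hk2 : k = 1 ∨ 2 ≤ k := by omega
      · -- k = 1
        obtain ⟨c, rfl⟩ : ∃ c, n = c + 1 := ⟨n - 1, by omega⟩
        have e0 : A (c+1+1) 0 = A (c+1) 0 := A_succ_zero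
        have e1 : A (c+1+1) 1 = 2 * A (c+1) 1 + (c+1) * A (c+1) 0 := by
          have := A_succ_succ (n := c+1) 0
          simpa using this
        have e2 : A (c+1+1) 2 = 3 * A (c+1) 2 + c * A (c+1) 1 := by
          have := A_succ_succ (n := c+1) 1
          simpa using this
        have h : A (c+1) 0 * A (c+1) 2 ≤ A (c+1) 1 ^ 2 := by simpa using ih 1 (by omega)
        show A (c+1+1) 0 * A (c+1+1) 2 ≤ A (c+1+1) 1 ^ 2
        rw [e0, e1, e2]
        generalize A (c+1) 0 = a0 at h ⊢
        generalize A (c+1) 1 = a1 at h ⊢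
        generalize A (c+1) 2 = a2 at h ⊢
        zify at h ⊢
        nlinarith [h, sq_nonneg ((a1:ℤ) - a0), mul_nonneg (mul_nonneg (Int.natCast_nonneg c) (Int.natCast_nonneg a0)) (Int.natCast_nonneg a1), Int.natCast_nonneg a0, Int.natCast_nonneg a1, mul_nonneg (Int.natCast_nonneg a0) (Int.natCast_nonneg a1)]
      · -- k ≥ 2
        obtain ⟨m, rfl⟩ : ∃ m, k = m + 2 := ⟨k - 2, by omega⟩
        obtain ⟨e, rfl⟩ : ∃ e, n = m + 3 + e := ⟨n - (m + 3), by omega⟩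
        have c1 : m + 3 + e - m = e + 3 := by omega
        have c2 : m + 3 + e - (m+1) = e + 2 := by omega
        have c3 : m + 3 + e - (m+2) = e + 1 := by omega
        have e1 : A (m+3+e+1) (m+1) = (m+2) * A (m+3+e) (m+1) + (e+3) * A (m+3+e) m := by
          rw [A_succ_succ m, c1]
        have e2 : A (m+3+e+1) (m+2) = (m+3) * A (m+3+e) (m+2) + (e+2) * A (m+3+e) (m+1) := by
          rw [A_succ_succ (m+1), c2]
        have e3 : A (m+3+e+1) (m+3) = (m+4) * A (m+3+e) (m+3) + (e+1) * A (m+3+e) (m+2) := by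
          rw [A_succ_succ (m+2), c3]
        have h1 : A (m+3+e) (m+1) * A (m+3+e) (m+3) ≤ A (m+3+e) (m+2)^2 := by
          simpa using ih (m+2) (by omega)
        have h2 : A (m+3+e) m * A (m+3+e) (m+2) ≤ A (m+3+e) (m+1)^2 := by
          simpa using ih (m+1) (by omega)
        have h3 : A (m+3+e) m * A (m+3+e) (m+3) ≤ A (m+3+e) (m+1) * A (m+3+e) (m+2) :=
          hchain m
        show A (m+3+e+1) (m+2-1) * A (m+3+e+1) (m+2+1) ≤ A (m+3+e+1) (m+2) ^ 2
        have hred : m + 2 - 1 = m + 1 := by omega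
        rw [hred]
        have hred2 : m + 2 + 1 = m + 3 := by omega
        rw [hred2, e1, e2, e3]
        generalize A (m+3+e) m = a0 at h2 h3 ⊢
        generalize A (m+3+e) (m+1) = a1 at h1 h2 h3 ⊢
        generalize A (m+3+e) (m+2) = a2 at h1 h2 h3 ⊢
        generalize A (m+3+e) (m+3) = a3 at h1 h3 ⊢
        zify at h1 h2 h3 ⊢
        have hA : ((m:ℤ)+2)*((m:ℤ)+4)*((a1:ℤ)*a3) ≤ ((m:ℤ)+2)*((m:ℤ)+4)*((a2:ℤ)^2) :=
          mul_le_mul_of_nonneg_left h1 (by positivity)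
        have hB : ((e:ℤ)+3)*((e:ℤ)+1)*((a0:ℤ)*a2) ≤ ((e:ℤ)+3)*((e:ℤ)+1)*((a1:ℤ)^2) :=
          mul_le_mul_of_nonneg_left h2 (by positivity)
        have hC : ((e:ℤ)+3)*((m:ℤ)+4)*((a0:ℤ)*a3) ≤ ((e:ℤ)+3)*((m:ℤ)+4)*((a1:ℤ)*a2) :=
          mul_le_mul_of_nonneg_left h3 (by positivity)
        have hSq : (0:ℤ) ≤ ((a1:ℤ) - a2)^2 := sq_nonneg _
        linarith [hA, hB, hC, hSq]

end Stmt9Aux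

/-- log-concavity of the Eulerian numbers: for `n ≥ 1` and `1 ≤ k ≤ n-1`,
`A(n,k-1)·A(n,k+1) ≤ A(n,k)²`. -/
theorem stmt9 (n k : ℕ) (hn : 1 ≤ n) (hk1 : 1 ≤ k) (hk2 : k ≤ n - 1) :
    A n (k - 1) * A n (k + 1) ≤ A n k ^ 2 :=
  Stmt9Aux.LC n k hk1
end

section
/- If two polynomials with nonnegative real coefficients each have log-concave coefficient sequences with no internal zeros, then their product also has a log-concave coefficient sequence. -/
open Finset

noncomputable def SIcc (f : ℤ → ℝ) (M : ℤ) : ℝ := ∑ i ∈ Icc (-1 : ℤ) (M + 1), f i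
noncomputable def Str (f g : ℤ → ℝ) (M d : ℤ) : ℝ := ∑ i ∈ Icc (-1 : ℤ) (M + 1), f i * g (i + d)

lemma sum_shift_Icc (h : ℤ → ℝ) (A B c : ℤ) :
    ∑ i ∈ Icc A B, h (i + c) = ∑ i ∈ Icc (A + c) (B + c), h i := by
  apply Finset.sum_nbij' (fun i => i + c) (fun i => i - c)
  · intro a ha; simp only [mem_Icc] at *; omega
  · intro a ha; simp only [mem_Icc] at *; omega
  · intro a _; ring
  · intro a _; ring
  · intro a _; rfl

lemma sum_supp (h : ℤ → ℝ) (lo hi A B : ℤ)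
    (h1 : ∀ i, i < lo → h i = 0) (h2 : ∀ i, hi < i → h i = 0)
    (hA : A ≤ lo) (hB : hi ≤ B) :
    ∑ i ∈ Icc A B, h i = ∑ i ∈ Icc lo hi, h i := by
  refine (Finset.sum_subset (Finset.Icc_subset_Icc hA hB) ?_).symm
  intro i hi1 hi2
  simp only [mem_Icc] at hi1 hi2
  rcases lt_or_ge i lo with h | h
  · exact h1 i h
  · exact h2 i (by omega)

lemma inner_shift (f g : ℤ → ℝ) (M d : ℤ)
    (hf : ∀ i, i < 0 ∨ M < i → f i = 0) :
    ∑ i ∈ Icc (-1 : ℤ) (M + 1), f (i - 1) * g (i + d + 1) = Str f g M (d + 2) := by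
  have step : ∀ i : ℤ, f (i - 1) * g (i + d + 1)
      = (fun t => f t * g (t + d + 2)) (i + (-1)) := by
    intro i
    simp only
    rw [show i + (-1) + d + 2 = i + d + 1 by ring, show i + (-1) = i - 1 by ring]
  rw [Finset.sum_congr rfl (fun i _ => step i)]
  rw [sum_shift_Icc (fun t => f t * g (t + d + 2)) (-1) (M+1) (-1)]
  have hsupp1 : ∀ i : ℤ, i < 0 → f i * g (i + d + 2) = 0 := fun i hi => by
    rw [hf i (Or.inl hi), zero_mul]
  have hsupp2 : ∀ i : ℤ, M < i → f i * g (i + d + 2) = 0 := fun i hi => by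
    rw [hf i (Or.inr hi), zero_mul]
  rw [sum_supp _ 0 M _ _ hsupp1 hsupp2 (by omega) (by omega),
    ← sum_supp _ 0 M (-1) (M+1) hsupp1 hsupp2 (by omega) (by omega)]
  unfold Str
  exact Finset.sum_congr rfl fun i _ => by rw [show i + (d + 2) = i + d + 2 by ring]

lemma strips (f g : ℤ → ℝ) (M : ℤ)
    (hf : ∀ i, i < 0 ∨ M < i → f i = 0) (hg : ∀ i, i < 0 ∨ M < i → g i = 0) :
    SIcc f M * SIcc g M
      = (∑ d ∈ Icc (0 : ℤ) (M + 2), Str f g M d)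
        + ∑ d ∈ Icc (1 : ℤ) (M + 2), Str g f M d := by
  unfold SIcc Str
  set I : Finset ℤ := Icc (-1 : ℤ) (M + 1) with hI
  rw [Finset.sum_mul_sum]
  rw [← Finset.sum_product' (s := I) (t := I) (f := fun i j => f i * g j)]
  rw [← Finset.sum_filter_add_sum_filter_not (I ×ˢ I) (fun p => p.1 ≤ p.2)]
  congr 1
  · have e1 : ∀ d ∈ Icc (0 : ℤ) (M + 2), (∑ i ∈ I, f i * g (i + d))
        = ∑ i ∈ I, (fun p : ℤ × ℤ => f p.2 * g (p.2 + p.1)) (d, i) := fun d _ => rfl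
    rw [Finset.sum_congr rfl e1,
      ← Finset.sum_product (Icc (0:ℤ) (M+2)) I (fun p : ℤ × ℤ => f p.2 * g (p.2 + p.1))]
    rw [← Finset.sum_filter_add_sum_filter_not (Icc (0:ℤ) (M+2) ×ˢ I)
      (fun p => p.2 + p.1 ∈ I)]
    have e2 : ∑ p ∈ (Icc (0:ℤ) (M+2) ×ˢ I).filter (fun p => ¬ (p.2 + p.1 ∈ I)),
        f p.2 * g (p.2 + p.1) = 0 := by
      apply Finset.sum_eq_zero
      intro p hp
      simp only [mem_filter, mem_product, mem_Icc, hI] at hp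
      rw [hg (p.2 + p.1) (by omega), mul_zero]
    rw [e2, add_zero]
    apply Finset.sum_nbij' (fun p : ℤ × ℤ => (p.2 - p.1, p.1)) (fun p : ℤ × ℤ => (p.2, p.2 + p.1))
    · intro p hp; simp only [mem_filter, mem_product, mem_Icc, hI] at *; omega
    · intro p hp; simp only [mem_filter, mem_product, mem_Icc, hI] at *; omega
    · intro p _; simp
    · intro p _; simp
    · intro p _; rw [show p.1 + (p.2 - p.1) = p.2 by ring]
  · have e1 : ∀ d ∈ Icc (1 : ℤ) (M + 2), (∑ i ∈ I, g i * f (i + d))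
        = ∑ i ∈ I, (fun p : ℤ × ℤ => g p.2 * f (p.2 + p.1)) (d, i) := fun d _ => rfl
    rw [Finset.sum_congr rfl e1,
      ← Finset.sum_product (Icc (1:ℤ) (M+2)) I (fun p : ℤ × ℤ => g p.2 * f (p.2 + p.1))]
    rw [← Finset.sum_filter_add_sum_filter_not (Icc (1:ℤ) (M+2) ×ˢ I)
      (fun p => p.2 + p.1 ∈ I)]
    have e2 : ∑ p ∈ (Icc (1:ℤ) (M+2) ×ˢ I).filter (fun p => ¬ (p.2 + p.1 ∈ I)),
        g p.2 * f (p.2 + p.1) = 0 := by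
      apply Finset.sum_eq_zero
      intro p hp
      simp only [mem_filter, mem_product, mem_Icc, hI] at hp
      rw [hf (p.2 + p.1) (by omega), mul_zero]
    rw [e2, add_zero]
    apply Finset.sum_nbij' (fun p : ℤ × ℤ => (p.1 - p.2, p.2)) (fun p : ℤ × ℤ => (p.2 + p.1, p.2))
    · intro p hp; simp only [mem_filter, mem_product, mem_Icc, hI] at *; omega
    · intro p hp; simp only [mem_filter, mem_product, mem_Icc, hI] at *; omega
    · intro p _; simp
    · intro p _; simp
    · intro p _; rw [mul_comm, show p.2 + (p.1 - p.2) = p.1 by ring]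

lemma str_vanish (f g : ℤ → ℝ) (M : ℤ)
    (hf : ∀ i, i < 0 ∨ M < i → f i = 0) (hg : ∀ i, i < 0 ∨ M < i → g i = 0) :
    ∀ d : ℤ, M < d → Str f g M d = 0 := by
  intro d hd
  unfold Str
  apply Finset.sum_eq_zero
  intro i _
  rcases lt_or_ge i 0 with h | h
  · rw [hf i (Or.inl h), zero_mul]
  · rw [hg (i + d) (Or.inr (by omega)), mul_zero]

lemma split_Icc0 (F : ℤ → ℝ) (M : ℤ) (hM : 1 ≤ M) :
    ∑ d ∈ Icc (0 : ℤ) (M + 2), F d = F 0 + F 1 + ∑ d ∈ Icc (2 : ℤ) (M + 2), F d := by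
  have h1 : Icc (0 : ℤ) (M + 2) = insert 0 (insert 1 (Icc (2 : ℤ) (M + 2))) := by
    ext x; simp only [mem_Icc, mem_insert]; omega
  rw [h1, Finset.sum_insert (by simp only [mem_insert, mem_Icc]; omega),
    Finset.sum_insert (by simp only [mem_Icc]; omega)]
  ring

lemma split_Icc1 (F : ℤ → ℝ) (M : ℤ) (hM : 1 ≤ M) :
    ∑ d ∈ Icc (1 : ℤ) (M + 2), F d = F 1 + ∑ d ∈ Icc (2 : ℤ) (M + 2), F d := by
  have h1 : Icc (1 : ℤ) (M + 2) = insert 1 (Icc (2 : ℤ) (M + 2)) := by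
    ext x; simp only [mem_Icc, mem_insert]; omega
  rw [h1, Finset.sum_insert (by simp only [mem_Icc]; omega)]

lemma extend_Icc (F : ℤ → ℝ) (M : ℤ) (hv : ∀ d, M < d → F d = 0) :
    ∑ d ∈ Icc (0 : ℤ) M, F d = ∑ d ∈ Icc (0 : ℤ) (M + 2), F d := by
  apply Finset.sum_subset (Finset.Icc_subset_Icc_right (by omega))
  intro d hd1 hd2
  simp only [mem_Icc] at hd1 hd2
  exact hv d (by omega)

theorem abstract_lc (X Y Z : ℤ → ℝ) (M : ℤ) (hM : 1 ≤ M)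
    (hX : ∀ i, i < 0 ∨ M < i → X i = 0) (hY : ∀ i, i < 0 ∨ M < i → Y i = 0)
    (hZ : ∀ i, i < 0 ∨ M < i → Z i = 0)
    (hpos : ∀ i d : ℤ, 0 ≤ d →
      0 ≤ X i * X (i + d) + X (i - 1) * X (i + d + 1)
          - Z i * Y (i + d) - Y (i - 1) * Z (i + d + 1))
    (hrel : ∀ i, Y i * Z (i + 1) = X i * X (i + 1)) :
    SIcc Z M * SIcc Y M ≤ SIcc X M * SIcc X M := by
  have hS0 : 0 ≤ ∑ d ∈ Icc (0 : ℤ) M, ∑ i ∈ Icc (-1 : ℤ) (M + 1),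
      (X i * X (i + d) + X (i - 1) * X (i + d + 1)
        - Z i * Y (i + d) - Y (i - 1) * Z (i + d + 1)) := by
    apply Finset.sum_nonneg
    intro d hd
    apply Finset.sum_nonneg
    intro i _
    exact hpos i d (mem_Icc.1 hd).1
  have key : ∀ d ∈ Icc (0 : ℤ) M, (∑ i ∈ Icc (-1 : ℤ) (M + 1),
      (X i * X (i + d) + X (i - 1) * X (i + d + 1)
        - Z i * Y (i + d) - Y (i - 1) * Z (i + d + 1)))
      = Str X X M d + Str X X M (d + 2) - Str Z Y M d - Str Y Z M (d + 2) := by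
    intro d _
    rw [Finset.sum_sub_distrib, Finset.sum_sub_distrib, Finset.sum_add_distrib]
    rw [inner_shift X X M d hX, inner_shift Y Z M d hY]
    rfl
  rw [Finset.sum_congr rfl key] at hS0
  have hdist : ∑ d ∈ Icc (0 : ℤ) M,
      (Str X X M d + Str X X M (d + 2) - Str Z Y M d - Str Y Z M (d + 2))
      = (∑ d ∈ Icc (0 : ℤ) M, Str X X M d) + (∑ d ∈ Icc (0 : ℤ) M, Str X X M (d + 2))
        - (∑ d ∈ Icc (0 : ℤ) M, Str Z Y M d) - ∑ d ∈ Icc (0 : ℤ) M, Str Y Z M (d + 2) := by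
    rw [Finset.sum_sub_distrib, Finset.sum_sub_distrib, Finset.sum_add_distrib]
  rw [hdist] at hS0
  have hshXX : ∑ d ∈ Icc (0 : ℤ) M, Str X X M (d + 2)
      = ∑ d ∈ Icc (2 : ℤ) (M + 2), Str X X M d := by
    rw [sum_shift_Icc (Str X X M) 0 M 2]; norm_num
  have hshYZ : ∑ d ∈ Icc (0 : ℤ) M, Str Y Z M (d + 2)
      = ∑ d ∈ Icc (2 : ℤ) (M + 2), Str Y Z M d := by
    rw [sum_shift_Icc (Str Y Z M) 0 M 2]; norm_num
  rw [hshXX, hshYZ] at hS0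
  have hextXX := extend_Icc (Str X X M) M (str_vanish X X M hX hX)
  have hextZY := extend_Icc (Str Z Y M) M (str_vanish Z Y M hZ hY)
  have hsplXX0 := split_Icc0 (Str X X M) M hM
  have hsplXX1 := split_Icc1 (Str X X M) M hM
  have hsplYZ1 := split_Icc1 (Str Y Z M) M hM
  have hstrX := strips X X M hX hX
  have hstrZY := strips Z Y M hZ hY
  have hrel1 : Str Y Z M 1 = Str X X M 1 :=
    Finset.sum_congr rfl fun i _ => hrel i
  linarith

lemma chain (c : ℕ → ℝ) (hlc : ∀ k, 1 ≤ k → c (k - 1) * c (k + 1) ≤ c k ^ 2)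
    (u v : ℕ) (huv : u ≤ v) (hpos : ∀ t, u ≤ t → t ≤ v + 1 → 0 < c t) :
    c u * c (v + 1) ≤ c (u + 1) * c v := by
  induction v, huv using Nat.le_induction with
  | base => exact le_of_eq (mul_comm _ _)
  | succ v hv ih =>
    have h1 : c u * c (v + 1) ≤ c (u + 1) * c v :=
      ih (fun t ht1 ht2 => hpos t ht1 (by omega))
    have h2 : c v * c (v + 2) ≤ c (v + 1) * c (v + 1) := by
      have := hlc (v + 1) (by omega)
      simpa [pow_two] using this
    have hc1 : 0 < c (v + 1) := hpos (v + 1) (by omega) (by omega)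
    have hcv : 0 < c v := hpos v (by omega) (by omega)
    have key : (c u * c (v + 1 + 1)) * (c (v + 1) * c v)
        ≤ (c (u + 1) * c (v + 1)) * (c (v + 1) * c v) := by
      calc (c u * c (v + 1 + 1)) * (c (v + 1) * c v)
          = (c u * c (v + 1)) * (c v * c (v + 2)) := by ring_nf
        _ ≤ (c (u + 1) * c v) * (c (v + 1) * c (v + 1)) := by
            have p1 : 0 ≤ c v * c (v + 2) :=
              mul_nonneg hcv.le (hpos (v + 2) (by omega) (by omega)).le
            have p2 : 0 ≤ c (u + 1) * c v :=
              mul_nonneg (hpos (u + 1) (by omega) (by omega)).le hcv.le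
            exact mul_le_mul h1 h2 p1 p2
        _ = (c (u + 1) * c (v + 1)) * (c (v + 1) * c v) := by ring
    exact le_of_mul_le_mul_right key (mul_pos hc1 hcv)

noncomputable def extZ (c : ℕ → ℝ) : ℤ → ℝ := fun n => if 0 ≤ n then c n.toNat else 0

lemma extZ_nonneg (c : ℕ → ℝ) (h0 : ∀ n, 0 ≤ c n) : ∀ n, 0 ≤ extZ c n := by
  intro n; unfold extZ; split
  · exact h0 _
  · exact le_refl 0

lemma extZ_neg (c : ℕ → ℝ) : ∀ n : ℤ, n < 0 → extZ c n = 0 := by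
  intro n hn; unfold extZ; rw [if_neg (by omega)]

lemma int_key (c : ℕ → ℝ) (h0 : ∀ n, 0 ≤ c n)
    (hlc : ∀ k, 1 ≤ k → c (k - 1) * c (k + 1) ≤ c k ^ 2)
    (hnz : ∀ i j k, i ≤ j → j ≤ k → 0 < c i → 0 < c k → 0 < c j) :
    ∀ i j : ℤ, i ≤ j → extZ c (i - 1) * extZ c (j + 1) ≤ extZ c i * extZ c j := by
  intro i j hij
  have hnn := extZ_nonneg c h0
  rcases lt_or_ge (i - 1) 0 with h | h
  · rw [extZ_neg c _ h, zero_mul]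
    exact mul_nonneg (hnn i) (hnn j)
  · have e1 : extZ c (i - 1) = c (i - 1).toNat := if_pos h
    have e2 : extZ c i = c ((i - 1).toNat + 1) := by
      rw [show extZ c i = c i.toNat from if_pos (by omega)]
      congr 1; omega
    have e3 : extZ c j = c j.toNat := if_pos (by omega)
    have e4 : extZ c (j + 1) = c (j.toNat + 1) := by
      rw [show extZ c (j + 1) = c (j + 1).toNat from if_pos (by omega)]
      congr 1; omega
    rw [e1, e2, e3, e4]
    set p := (i - 1).toNat with hp
    set q := j.toNat with hq
    rcases eq_or_lt_of_le (h0 p) with hcp | hcp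
    · rw [← hcp, zero_mul]; exact mul_nonneg (h0 _) (h0 _)
    rcases eq_or_lt_of_le (h0 (q + 1)) with hcq | hcq
    · rw [← hcq, mul_zero]; exact mul_nonneg (h0 _) (h0 _)
    exact chain c hlc p q (by omega)
      (fun t ht1 ht2 => hnz p t (q + 1) ht1 ht2 hcp hcq)

lemma bridge (P Q : Polynomial ℝ) (n : ℕ) (M : ℤ) (hn : (n : ℤ) ≤ M + 1) :
    ∑ i ∈ Icc (-1 : ℤ) (M + 1),
      extZ (fun t => P.coeff t) i * extZ (fun t => Q.coeff t) ((n : ℤ) - i)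
      = (P * Q).coeff n := by
  rw [Polynomial.coeff_mul, Finset.Nat.sum_antidiagonal_eq_sum_range_succ_mk]
  have h1 : ∀ i : ℤ, i < 0 →
      extZ (fun t => P.coeff t) i * extZ (fun t => Q.coeff t) ((n : ℤ) - i) = 0 := by
    intro i hi; unfold extZ; rw [if_neg (by omega), zero_mul]
  have h2 : ∀ i : ℤ, (n : ℤ) < i →
      extZ (fun t => P.coeff t) i * extZ (fun t => Q.coeff t) ((n : ℤ) - i) = 0 := by
    intro i hi; unfold extZ
    rw [if_neg (show ¬ (0:ℤ) ≤ (n:ℤ) - i by omega), mul_zero]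
  rw [sum_supp _ 0 n (-1) (M+1) h1 h2 (by omega) hn]
  apply Finset.sum_nbij' (fun i : ℤ => i.toNat) (fun t : ℕ => (t : ℤ))
  · intro i hi; simp only [mem_Icc, mem_range] at *; omega
  · intro t ht; simp only [mem_Icc, mem_range] at *; omega
  · intro i hi; simp only [mem_Icc] at hi; omega
  · intro t _; omega
  · intro i hi
    simp only [mem_Icc] at hi
    unfold extZ
    rw [if_pos hi.1, if_pos (show (0:ℤ) ≤ (n:ℤ) - i by omega)]
    have e : ((n:ℤ) - i).toNat = n - i.toNat := by omega
    rw [e]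

lemma final_ineq (a b : ℤ → ℝ) (ha0 : ∀ i, 0 ≤ a i) (hb0 : ∀ i, 0 ≤ b i)
    (haneg : ∀ i : ℤ, i < 0 → a i = 0) (hbneg : ∀ i : ℤ, i < 0 → b i = 0)
    (hka : ∀ i j : ℤ, i ≤ j → a (i - 1) * a (j + 1) ≤ a i * a j)
    (hkb : ∀ i j : ℤ, i ≤ j → b (i - 1) * b (j + 1) ≤ b i * b j)
    (k : ℤ) (hk : 1 ≤ k) :
    SIcc (fun t => a t * b (k + 1 - t)) (k + 1) * SIcc (fun t => a t * b (k - 1 - t)) (k + 1)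
      ≤ SIcc (fun t => a t * b (k - t)) (k + 1) * SIcc (fun t => a t * b (k - t)) (k + 1) := by
  apply abstract_lc (fun t => a t * b (k - t)) (fun t => a t * b (k - 1 - t))
    (fun t => a t * b (k + 1 - t)) (k + 1) (by omega)
  · intro i hi
    rcases hi with hi | hi
    · rw [haneg i hi, zero_mul]
    · rw [hbneg (k - i) (by omega), mul_zero]
  · intro i hi
    rcases hi with hi | hi
    · rw [haneg i hi, zero_mul]
    · rw [hbneg (k - 1 - i) (by omega), mul_zero]
  · intro i hi
    rcases hi with hi | hi
    · rw [haneg i hi, zero_mul]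
    · rw [hbneg (k + 1 - i) (by omega), mul_zero]
  · intro i d hd
    rw [show k - (i - 1) = k - i + 1 by ring,
      show k - (i + d + 1) = k - (i + d) - 1 by ring,
      show k + 1 - i = k - i + 1 by ring,
      show k - 1 - (i + d) = k - (i + d) - 1 by ring,
      show k - 1 - (i - 1) = k - i by ring,
      show k + 1 - (i + d + 1) = k - (i + d) by ring]
    have h1 := hka i (i + d) (by omega)
    have h2 := hkb (k - (i + d)) (k - i) (by omega)
    nlinarith [mul_nonneg (sub_nonneg.2 h1) (sub_nonneg.2 h2)]
  · intro i
    rw [show k - 1 - i = k - (i + 1) - 0 by ring,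
      show k + 1 - (i + 1) = k - i by ring]
    rw [show k - (i + 1) - 0 = k - (i + 1) by ring]
    ring

/-- the product of two polynomials with nonnegative, log-concave coefficient
sequences having no internal zeros again has a log-concave coefficient sequence. -/
theorem stmt12 (P Q : Polynomial ℝ)
    (hP0 : ∀ k, 0 ≤ P.coeff k) (hQ0 : ∀ k, 0 ≤ Q.coeff k)
    (hPlc : ∀ k, 1 ≤ k → P.coeff (k - 1) * P.coeff (k + 1) ≤ P.coeff k ^ 2)
    (hQlc : ∀ k, 1 ≤ k → Q.coeff (k - 1) * Q.coeff (k + 1) ≤ Q.coeff k ^ 2)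
    (hPnz : ∀ i j k, i ≤ j → j ≤ k → 0 < P.coeff i → 0 < P.coeff k → 0 < P.coeff j)
    (hQnz : ∀ i j k, i ≤ j → j ≤ k → 0 < Q.coeff i → 0 < Q.coeff k → 0 < Q.coeff j) :
    ∀ k, 1 ≤ k → (P * Q).coeff (k - 1) * (P * Q).coeff (k + 1) ≤ (P * Q).coeff k ^ 2 := by
  intro k hk
  have hka := int_key (fun t => P.coeff t) hP0 hPlc hPnz
  have hkb := int_key (fun t => Q.coeff t) hQ0 hQlc hQnz
  have main := final_ineq (extZ (fun t => P.coeff t)) (extZ (fun t => Q.coeff t))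
    (extZ_nonneg _ hP0) (extZ_nonneg _ hQ0) (extZ_neg _) (extZ_neg _) hka hkb
    (k : ℤ) (by exact_mod_cast hk)
  unfold SIcc at main
  have e1 : ∑ i ∈ Icc (-1 : ℤ) ((k : ℤ) + 1 + 1),
      extZ (fun t => P.coeff t) i * extZ (fun t => Q.coeff t) ((k : ℤ) - i)
      = (P * Q).coeff k := bridge P Q k ((k : ℤ) + 1) (by omega)
  have e2 : ∑ i ∈ Icc (-1 : ℤ) ((k : ℤ) + 1 + 1),
      extZ (fun t => P.coeff t) i * extZ (fun t => Q.coeff t) ((k : ℤ) + 1 - i)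
      = (P * Q).coeff (k + 1) := by
    have step : ∀ i ∈ Icc (-1 : ℤ) ((k : ℤ) + 1 + 1),
        extZ (fun t => P.coeff t) i * extZ (fun t => Q.coeff t) ((k : ℤ) + 1 - i)
        = extZ (fun t => P.coeff t) i * extZ (fun t => Q.coeff t) (((k + 1 : ℕ) : ℤ) - i) := by
      intro i _
      rw [show ((k : ℤ) + 1 - i) = (((k + 1 : ℕ) : ℤ) - i) by push_cast; ring]
    rw [Finset.sum_congr rfl step]
    exact bridge P Q (k + 1) ((k : ℤ) + 1) (by push_cast; omega)
  have e3 : ∑ i ∈ Icc (-1 : ℤ) ((k : ℤ) + 1 + 1),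
      extZ (fun t => P.coeff t) i * extZ (fun t => Q.coeff t) ((k : ℤ) - 1 - i)
      = (P * Q).coeff (k - 1) := by
    have step : ∀ i ∈ Icc (-1 : ℤ) ((k : ℤ) + 1 + 1),
        extZ (fun t => P.coeff t) i * extZ (fun t => Q.coeff t) ((k : ℤ) - 1 - i)
        = extZ (fun t => P.coeff t) i * extZ (fun t => Q.coeff t) (((k - 1 : ℕ) : ℤ) - i) := by
      intro i _
      rw [show ((k : ℤ) - 1 - i) = (((k - 1 : ℕ) : ℤ) - i) by omega]
    rw [Finset.sum_congr rfl step]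
    exact bridge P Q (k - 1) ((k : ℤ) + 1) (by omega)
  rw [e1, e2, e3] at main
  rw [pow_two, mul_comm ((P * Q).coeff (k - 1))]
  exact main
end
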